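/- arXiv:2202.05043 — 7 statements merged into one kernel-verified Lean document; each statement's English description precedes it below -/
import Mathlib

section
/- Let α be a real number with 0 < α < 1. Then there exists a constant C(α) > 0, depending only on α, such that the following holds. Let M be a real number with M ≥ 1, and let a_1, …, a_N be positive integers (not necessarily distinct) with a_n ≤ M for all 1 ≤ n ≤ N. For each positive integer d define ω(d) = #{1 ≤ n ≤ N : d divides a_n}. Then for every positive integer s, ∑_{n=1}^{N} (a_n/φ(a_n))^s ≤ C(α)^s · ( N + ∑_{p prime, p ≤ (ln M)^α} ω(p)·(ln p)^s / p ). -/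
/-!
Write `a / φ(a) = ∏_{p ∣ a} (1 - 1/p)⁻¹ ≤ exp (∑_{p ∣ a} 1/(p - 1))` and split the primes at
`y = (log M)^α`.

For the primes `p > y` dividing `a ≤ M`, `1/(p - 1) ≤ 2 log p / (p log y)`, and
`∑_{p ∣ a} log p / p ≤ log log M + O(1)` by Mertens' estimate `∑_{p ≤ x} log p / p ≤ log x + log 4`
(primes up to `log M`) and `∏_{p ∣ a} p ≤ M` (the larger ones); since `log y = α log log M`,
these primes contribute a factor `exp (O(1/α))`.

For any set `S` of primes, with `T = ∑_{p ∈ S} log p / p`, Mertens' estimate for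
`∑_{p ≤ x} 1/(p - 1)` (by partial summation) applied up to `x = exp T` gives
`∏_{p ∈ S} (1 - 1/p)⁻¹ ≤ e⁷ max T 1`, while the primes of `S` above `exp (T/4)` carry at least
`T/4` of `T`, so `∑_{p ∈ S} (log p)^s / p ≥ (T/4)^s`. Taking `S` the primes `≤ y` dividing `a`
and summing over `n` (exchanging the sums over `n` and `p`) gives the theorem; when
`log M < e`, the trivial bound `a / φ(a) ≤ M` suffices.
-/

open Finset Real

namespace Romanoff

open scoped Nat

lemma div_le_factorization_factorial {p : ℕ} (hp : p.Prime) (n : ℕ) :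
    n / p ≤ (n !).factorization p := by
  rw [Nat.factorization_factorial hp (Nat.lt_add_of_pos_right two_pos)]
  simpa using single_le_sum (f := fun i => n / p ^ i) (fun _ _ => Nat.zero_le _)
    (show 1 ∈ Ico 1 (Nat.log p n + 2) by simp)

lemma log_factorial_eq_sum_primesLE (n : ℕ) :
    log (n ! : ℕ) = ∑ p ∈ Nat.primesLE n, ((n !).factorization p) * log p := by
  rw [log_nat_eq_sum_factorization]
  refine Finsupp.sum_of_support_subset _ (fun p hp => ?_) _ (by simp)
  rw [Nat.support_factorization, Nat.mem_primeFactors] at hp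
  exact Nat.mem_primesLE.mpr ⟨(hp.1.dvd_factorial).mp hp.2.1, hp.1⟩

lemma log_four_lt : log 4 < 3 / 2 := by
  rw [show (4 : ℝ) = 2 ^ 2 by norm_num, log_pow]; linarith [log_two_lt_d9]

theorem sum_primesLE_log_div_self_le (n : ℕ) :
    ∑ p ∈ Nat.primesLE n, log p / p ≤ log n + log 4 := by
  rcases Nat.eq_zero_or_pos n with rfl | hn
  · simp [Nat.primesLE_zero]; positivity
  have hn' : (0 : ℝ) < n := by exact_mod_cast hn
  have hterm : ∀ p ∈ Nat.primesLE n,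
      n * (log p / p) ≤ ((n !).factorization p) * log p + log p := by
    intro p hp
    have hp' := Nat.prime_of_mem_primesLE hp
    have hfloor : (n : ℝ) / p < (n / p : ℕ) + 1 := by
      rw [← Nat.floor_div_eq_div (K := ℝ)]; exact Nat.lt_floor_add_one _
    have hv : ((n / p : ℕ) : ℝ) ≤ (n !).factorization p := by
      exact_mod_cast div_le_factorization_factorial hp' n
    calc (n : ℝ) * (log p / p) = n / p * log p := by ring
      _ ≤ ((n !).factorization p + 1) * log p := by gcongr; linarith
      _ = _ := by ring
  have hfact : log (n ! : ℕ) ≤ n * log n := by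
    rw [← log_pow]
    exact log_le_log (by positivity) (by exact_mod_cast Nat.factorial_le_pow n)
  have htheta := Chebyshev.theta_le_log4_mul_x hn'.le
  rw [Chebyshev.theta_eq_sum_primesLE_log] at htheta
  have := sum_le_sum hterm
  rw [← mul_sum, sum_add_distrib, ← log_factorial_eq_sum_primesLE] at this
  refine le_of_mul_le_mul_left ?_ hn'
  linarith

theorem sum_primesLE_floor_log_div_self_le {x : ℝ} (hx : 1 ≤ x) :
    ∑ p ∈ Nat.primesLE ⌊x⌋₊, log p / p ≤ log x + log 4 := by
  have hfloor : (1 : ℝ) ≤ ⌊x⌋₊ := by exact_mod_cast Nat.one_le_floor_iff x |>.mpr hx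
  have := log_le_log (by linarith) (Nat.floor_le (by linarith : 0 ≤ x))
  linarith [sum_primesLE_log_div_self_le ⌊x⌋₊]

lemma sum_primesLE_succ {M : Type*} [AddCommMonoid M] (f : ℕ → M) (n : ℕ) :
    ∑ p ∈ Nat.primesLE (n + 1), f p =
      ∑ p ∈ Nat.primesLE n, f p + if (n + 1).Prime then f (n + 1) else 0 := by
  rw [Nat.primesLE_succ]
  split_ifs
  · rw [sum_insert fun h => (Nat.le_of_mem_primesLE h).not_gt n.lt_succ_self, add_comm]
  · rw [add_zero]

/-- Monotonically nonincreasing from `m = 2` on; this is the discrete partial summation that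
turns the bound on `∑ log p / p` into one on `∑ 1 / (p - 1)`. -/
noncomputable def mertensPotential (m : ℕ) : ℝ :=
  ∑ p ∈ Nat.primesLE m, ((p : ℝ) - 1)⁻¹ - (∑ p ∈ Nat.primesLE m, log p / p) / log m
    - log (log m) + log 4 / log m + (m : ℝ)⁻¹

lemma mertensPotential_succ_le {m : ℕ} (hm : 2 ≤ m) :
    mertensPotential (m + 1) ≤ mertensPotential m := by
  have hm' : (2 : ℝ) ≤ m := by exact_mod_cast hm
  have hsub : ((m + 1 : ℕ) : ℝ) - 1 = m := by push_cast; ring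
  have hinv : ((m + 1 : ℕ) : ℝ)⁻¹ ≤ (m : ℝ)⁻¹ := by
    apply inv_anti₀ (by linarith); push_cast; linarith
  unfold mertensPotential
  rw [sum_primesLE_succ, sum_primesLE_succ, hsub]
  set A := ∑ p ∈ Nat.primesLE m, log p / p
  set L := log m
  set L' := log (m + 1 : ℕ)
  have hL : 0 < L := log_pos (by linarith)
  have hLL' : L ≤ L' := log_le_log (by linarith) (by push_cast; linarith)
  have hL' : 0 < L' := hL.trans_le hLL'
  have key : A / L - A / L' - log 4 / L + log 4 / L' ≤ log L' - log L := by
    have hA : A - log 4 ≤ L := by linarith [sum_primesLE_log_div_self_le m]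
    calc A / L - A / L' - log 4 / L + log 4 / L' = (A - log 4) * (1 / L - 1 / L') := by ring
      _ ≤ L * (1 / L - 1 / L') :=
          mul_le_mul_of_nonneg_right hA (sub_nonneg.mpr (one_div_le_one_div_of_le hL hLL'))
      _ = 1 - (L' / L)⁻¹ := by field_simp
      _ ≤ log (L' / L) := one_sub_inv_le_log_of_pos (by positivity)
      _ = log L' - log L := log_div hL'.ne' hL.ne'
  split_ifs
  · have : L' / (m + 1 : ℕ) / L' = ((m + 1 : ℕ) : ℝ)⁻¹ := by field_simp
    rw [add_div, this]
    linarith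
  · rw [add_zero, add_zero]
    linarith

lemma mertensPotential_le {n : ℕ} (hn : 2 ≤ n) : mertensPotential n ≤ 3 - log (log 2) := by
  induction n, hn using Nat.le_induction with
  | base =>
    have h2 : Nat.primesLE 2 = {2} := by decide
    have hlog4 : log 4 = 2 * log 2 := by
      rw [show (4 : ℝ) = 2 ^ 2 by norm_num, log_pow]; norm_num
    have hlog2 : log 2 ≠ 0 := (log_pos one_lt_two).ne'
    refine le_of_eq ?_
    simp only [mertensPotential, h2, sum_singleton, Nat.cast_ofNat, hlog4]
    field_simp
    ring
  | succ m hm ih => exact (mertensPotential_succ_le hm).trans ih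

theorem sum_primesLE_inv_sub_one_le {n : ℕ} (hn : 2 ≤ n) :
    ∑ p ∈ Nat.primesLE n, ((p : ℝ) - 1)⁻¹ ≤ log (log n) + 5 := by
  have hL : 0 < log n := log_pos (by exact_mod_cast hn)
  have hA : (∑ p ∈ Nat.primesLE n, log p / p) / log n ≤ 1 + log 4 / log n := by
    rw [div_le_iff₀ hL, add_mul, div_mul_cancel₀ _ hL.ne', one_mul]
    exact sum_primesLE_log_div_self_le n
  have hloglog2 : -1 ≤ log (log 2) := by
    have h := one_sub_inv_le_log_of_pos (log_pos one_lt_two)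
    have : (log 2)⁻¹ ≤ 2 := by
      rw [inv_le_comm₀ (log_pos one_lt_two) two_pos]; linarith [log_two_gt_d9]
    linarith
  have := mertensPotential_le hn
  unfold mertensPotential at this
  linarith [inv_nonneg.mpr (Nat.cast_nonneg (α := ℝ) n)]

lemma inv_sub_one_le_two_div {x : ℝ} (hx : 2 ≤ x) : (x - 1)⁻¹ ≤ 2 / x := by
  rw [inv_eq_one_div, div_le_div_iff₀ (by linarith) (by linarith)]
  linarith

lemma sum_filter_lt_inv_sub_one_le {S : Finset ℕ} (hS : ∀ p ∈ S, 1 < p) {y : ℝ} (hy : 1 < y) :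
    ∑ p ∈ S.filter (fun p : ℕ => y < p), ((p : ℝ) - 1)⁻¹ ≤ 2 / log y * ∑ p ∈ S, log p / p := by
  have hlogy : 0 < log y := log_pos hy
  calc ∑ p ∈ S.filter (fun p : ℕ => y < p), ((p : ℝ) - 1)⁻¹
      ≤ ∑ p ∈ S.filter (fun p : ℕ => y < p), 2 / log y * (log p / p) := by
        refine sum_le_sum fun p hp => ?_
        obtain ⟨hpS, hyp⟩ := mem_filter.mp hp
        have hp2 : (2 : ℝ) ≤ p := by exact_mod_cast hS p hpS
        calc ((p : ℝ) - 1)⁻¹ ≤ 2 / p := inv_sub_one_le_two_div hp2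
          _ = 2 / log y * (log y / p) := by field_simp
          _ ≤ 2 / log y * (log p / p) := by
            gcongr
    _ ≤ ∑ p ∈ S, 2 / log y * (log p / p) :=
        sum_le_sum_of_subset_of_nonneg (filter_subset _ _) fun _ _ _ => by positivity
    _ = 2 / log y * ∑ p ∈ S, log p / p := (mul_sum _ _ _).symm

theorem sum_inv_sub_one_le_log_max {S : Finset ℕ} (hS : ∀ p ∈ S, p.Prime) :
    ∑ p ∈ S, ((p : ℝ) - 1)⁻¹ ≤ log (max (∑ p ∈ S, log p / p) 1) + 7 := by
  set T := ∑ p ∈ S, log p / p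
  set τ := max T 1
  have hτ : 1 ≤ τ := le_max_right T 1
  have hz : τ + 1 ≤ exp τ := add_one_le_exp τ
  have hfloor : 2 ≤ ⌊exp τ⌋₊ := Nat.le_floor (by push_cast; linarith)
  have hsmall : ∑ p ∈ S.filter (fun p : ℕ => ¬ exp τ < p), ((p : ℝ) - 1)⁻¹ ≤ log τ + 5 := by
    calc ∑ p ∈ S.filter (fun p : ℕ => ¬ exp τ < p), ((p : ℝ) - 1)⁻¹
        ≤ ∑ p ∈ Nat.primesLE ⌊exp τ⌋₊, ((p : ℝ) - 1)⁻¹ := by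
          refine sum_le_sum_of_subset_of_nonneg (fun p hp => ?_) fun p hp _ => ?_
          · obtain ⟨hpS, hpz⟩ := mem_filter.mp hp
            exact Nat.mem_primesLE.mpr ⟨Nat.le_floor (not_lt.mp hpz), hS p hpS⟩
          · have hp1 : (1 : ℝ) ≤ p := by exact_mod_cast (Nat.one_lt_of_mem_primesLE hp).le
            exact inv_nonneg.mpr (sub_nonneg.mpr hp1)
      _ ≤ log (log ⌊exp τ⌋₊) + 5 := sum_primesLE_inv_sub_one_le hfloor
      _ ≤ log τ + 5 := by
          have h0 : (0 : ℝ) < ⌊exp τ⌋₊ := by positivity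
          gcongr
          · exact log_pos (by exact_mod_cast hfloor)
          · exact (log_le_log h0 (Nat.floor_le (exp_pos τ).le)).trans_eq (log_exp τ)
  have hlarge : ∑ p ∈ S.filter (fun p : ℕ => exp τ < p), ((p : ℝ) - 1)⁻¹ ≤ 2 := by
    calc ∑ p ∈ S.filter (fun p : ℕ => exp τ < p), ((p : ℝ) - 1)⁻¹ ≤ 2 / log (exp τ) * T :=
          sum_filter_lt_inv_sub_one_le (fun p hp => (hS p hp).one_lt) (by linarith)
      _ ≤ 2 := by
          rw [log_exp, div_mul_eq_mul_div, div_le_iff₀ (by linarith)]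
          linarith [le_max_left T 1]
  rw [← sum_filter_add_sum_filter_not S (fun p : ℕ => exp τ < p)]
  linarith

theorem pow_le_sum_log_pow_div_self {S : Finset ℕ} (hS : ∀ p ∈ S, p.Prime)
    (hT : 3 ≤ ∑ p ∈ S, log p / p) {s : ℕ} (hs : 1 ≤ s) :
    ((∑ p ∈ S, log p / p) / 4) ^ s ≤ ∑ p ∈ S, log p ^ s / p := by
  set T := ∑ p ∈ S, log p / p
  set w := exp (T / 4)
  have hhead : ∑ p ∈ S.filter (fun p : ℕ => ¬ w < p), log p / p ≤ T / 4 + log 4 := by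
    calc ∑ p ∈ S.filter (fun p : ℕ => ¬ w < p), log p / p
        ≤ ∑ p ∈ Nat.primesLE ⌊w⌋₊, log p / p := by
          refine sum_le_sum_of_subset_of_nonneg (fun p hp => ?_) fun _ _ _ => by positivity
          obtain ⟨hpS, hpw⟩ := mem_filter.mp hp
          exact Nat.mem_primesLE.mpr ⟨Nat.le_floor (not_lt.mp hpw), hS p hpS⟩
      _ ≤ log w + log 4 := sum_primesLE_floor_log_div_self_le (one_le_exp (by linarith))
      _ = T / 4 + log 4 := by rw [log_exp]
  have htail : T / 4 ≤ ∑ p ∈ S.filter (fun p : ℕ => w < p), log p / p := by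
    have hsplit := sum_filter_add_sum_filter_not S (fun p : ℕ => w < p) (fun p => log p / p)
    linarith [log_four_lt]
  have hmono : ∀ p ∈ S.filter (fun p : ℕ => w < p),
      (T / 4) ^ (s - 1) * (log p / p) ≤ log p ^ s / p := by
    intro p hp
    have hwp : T / 4 ≤ log p := by
      rw [← log_exp (T / 4)]; exact log_le_log (exp_pos _) (mem_filter.mp hp).2.le
    calc (T / 4) ^ (s - 1) * (log p / p) ≤ log p ^ (s - 1) * (log p / p) := by
          gcongr
      _ = log p ^ s / p := by rw [← mul_div_assoc, ← pow_succ, Nat.sub_add_cancel hs]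
  calc (T / 4) ^ s = (T / 4) ^ (s - 1) * (T / 4) := by rw [← pow_succ, Nat.sub_add_cancel hs]
    _ ≤ (T / 4) ^ (s - 1) * ∑ p ∈ S.filter (fun p : ℕ => w < p), log p / p := by
        gcongr
    _ ≤ ∑ p ∈ S.filter (fun p : ℕ => w < p), log p ^ s / p := by
        rw [mul_sum]; exact sum_le_sum hmono
    _ ≤ ∑ p ∈ S, log p ^ s / p :=
        sum_le_sum_of_subset_of_nonneg (filter_subset _ _) fun _ _ _ => by positivity

lemma inv_one_sub_inv_nonneg (p : ℕ) : 0 ≤ (1 - (p : ℝ)⁻¹)⁻¹ :=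
  inv_nonneg.mpr (sub_nonneg.mpr (Nat.cast_inv_le_one p))

lemma prod_inv_one_sub_inv_nonneg (S : Finset ℕ) : 0 ≤ ∏ p ∈ S, (1 - (p : ℝ)⁻¹)⁻¹ :=
  prod_nonneg fun p _ => inv_one_sub_inv_nonneg p

lemma prod_inv_one_sub_inv_le_exp {S : Finset ℕ} (hS : ∀ p ∈ S, 1 < p) :
    ∏ p ∈ S, (1 - (p : ℝ)⁻¹)⁻¹ ≤ exp (∑ p ∈ S, ((p : ℝ) - 1)⁻¹) := by
  rw [exp_sum]
  refine prod_le_prod (fun p _ => inv_one_sub_inv_nonneg p) fun p hp => ?_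
  have hp : (1 : ℝ) < p := by exact_mod_cast hS p hp
  calc (1 - (p : ℝ)⁻¹)⁻¹ = ((p : ℝ) - 1)⁻¹ + 1 := by
        field_simp [(by linarith : (p : ℝ) - 1 ≠ 0)]; ring
    _ ≤ exp ((p : ℝ) - 1)⁻¹ := add_one_le_exp _

theorem prod_inv_one_sub_inv_pow_le {S : Finset ℕ} (hS : ∀ p ∈ S, p.Prime) {s : ℕ} (hs : 1 ≤ s) :
    (∏ p ∈ S, (1 - (p : ℝ)⁻¹)⁻¹) ^ s ≤ exp 9 ^ s * (1 + ∑ p ∈ S, log p ^ s / p) := by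
  set T := ∑ p ∈ S, log p / p
  have hD : ∏ p ∈ S, (1 - (p : ℝ)⁻¹)⁻¹ ≤ exp 7 * max T 1 :=
    calc ∏ p ∈ S, (1 - (p : ℝ)⁻¹)⁻¹ ≤ exp (∑ p ∈ S, ((p : ℝ) - 1)⁻¹) :=
          prod_inv_one_sub_inv_le_exp fun p hp => (hS p hp).one_lt
      _ ≤ exp (log (max T 1) + 7) := exp_le_exp.mpr (sum_inv_sub_one_le_log_max hS)
      _ = exp 7 * max T 1 := by rw [exp_add, exp_log (by positivity), mul_comm]
  have hD0 := prod_inv_one_sub_inv_nonneg S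
  have h9 : 4 * exp 7 ≤ exp 9 := by
    have : exp 9 = exp 1 * exp 1 * exp 7 := by rw [← exp_add, ← exp_add]; norm_num
    rw [this]
    have := add_one_le_exp (1 : ℝ)
    gcongr
    nlinarith
  have hsum : 0 ≤ ∑ p ∈ S, log p ^ s / p := sum_nonneg fun _ _ => by positivity
  rcases le_or_gt 3 T with hT | hT
  · calc (∏ p ∈ S, (1 - (p : ℝ)⁻¹)⁻¹) ^ s ≤ (exp 9 * (T / 4)) ^ s := by
          refine pow_le_pow_left₀ hD0 (hD.trans ?_) s
          rw [max_eq_left (by linarith)]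
          nlinarith [exp_pos 7]
      _ = exp 9 ^ s * (T / 4) ^ s := mul_pow _ _ _
      _ ≤ exp 9 ^ s * (1 + ∑ p ∈ S, log p ^ s / p) := by
          gcongr; linarith [pow_le_sum_log_pow_div_self hS hT hs]
  · calc (∏ p ∈ S, (1 - (p : ℝ)⁻¹)⁻¹) ^ s ≤ exp 9 ^ s := by
          refine pow_le_pow_left₀ hD0 (hD.trans ?_) s
          have : max T 1 ≤ 3 := max_le hT.le (by norm_num)
          nlinarith [exp_pos 7]
      _ ≤ exp 9 ^ s * (1 + ∑ p ∈ S, log p ^ s / p) :=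
          le_mul_of_one_le_right (by positivity) (by linarith)

lemma div_totient_eq_prod {a : ℕ} (ha : a ≠ 0) :
    (a : ℝ) / a.totient = ∏ p ∈ a.primeFactors, (1 - (p : ℝ)⁻¹)⁻¹ := by
  have hφ : (a.totient : ℝ) = a * ∏ p ∈ a.primeFactors, (1 - (p : ℝ)⁻¹) := by
    have h := congrArg (Rat.cast : ℚ → ℝ) (Nat.totient_eq_mul_prod_factors a)
    push_cast at h
    exact h
  have ha' : (a : ℝ) ≠ 0 := by exact_mod_cast ha
  rw [hφ, prod_inv_distrib, div_mul_eq_div_div, div_self ha', one_div]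

lemma sum_primeFactors_log_div_self_le {x : ℝ} (hx : 1 ≤ x) (a : ℕ) :
    ∑ p ∈ a.primeFactors, log p / p ≤ log x + log 4 + log a / x := by
  rcases eq_or_ne a 0 with rfl | ha
  · simp only [Nat.primeFactors_zero, sum_empty, Nat.cast_zero, log_zero, zero_div, add_zero]
    have := log_nonneg hx
    have := log_nonneg (by norm_num : (1 : ℝ) ≤ 4)
    linarith
  have hsmall : ∑ p ∈ a.primeFactors.filter (fun p : ℕ => ¬ x < p), log p / p ≤ log x + log 4 :=
    calc ∑ p ∈ a.primeFactors.filter (fun p : ℕ => ¬ x < p), log p / p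
        ≤ ∑ p ∈ Nat.primesLE ⌊x⌋₊, log p / p := by
          refine sum_le_sum_of_subset_of_nonneg (fun p hp => ?_) fun _ _ _ => by positivity
          obtain ⟨hpa, hpx⟩ := mem_filter.mp hp
          exact Nat.mem_primesLE.mpr
            ⟨Nat.le_floor (not_lt.mp hpx), Nat.prime_of_mem_primeFactors hpa⟩
      _ ≤ log x + log 4 := sum_primesLE_floor_log_div_self_le hx
  have hlarge : ∑ p ∈ a.primeFactors.filter (fun p : ℕ => x < p), log p / p ≤ log a / x :=
    calc ∑ p ∈ a.primeFactors.filter (fun p : ℕ => x < p), log p / p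
        ≤ ∑ p ∈ a.primeFactors.filter (fun p : ℕ => x < p), log p / x := by
          refine sum_le_sum fun p hp => ?_
          gcongr
          exact (mem_filter.mp hp).2.le
      _ ≤ ∑ p ∈ a.primeFactors, log p / x :=
          sum_le_sum_of_subset_of_nonneg (filter_subset _ _) fun _ _ _ => by positivity
      _ = log (∏ p ∈ a.primeFactors, p : ℕ) / x := by
          rw [← sum_div, Nat.cast_prod, log_prod fun p hp => by
            exact_mod_cast (Nat.pos_of_mem_primeFactors hp).ne']
      _ ≤ log a / x := by
          gcongr
          · exact_mod_cast prod_pos fun p hp => Nat.pos_of_mem_primeFactors hp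
          · exact_mod_cast Nat.le_of_dvd (Nat.pos_of_ne_zero ha) (Nat.prod_primeFactors_dvd a)
  rw [← sum_filter_add_sum_filter_not a.primeFactors (fun p : ℕ => x < p)]
  linarith

theorem sum_primeFactors_filter_lt_rpow_inv_sub_one_le {α M : ℝ} (hα : 0 < α)
    (hM : exp 1 ≤ log M) {a : ℕ} (ha : 0 < a) (haM : (a : ℝ) ≤ M) :
    ∑ p ∈ a.primeFactors.filter (fun p : ℕ => log M ^ α < p), ((p : ℝ) - 1)⁻¹ ≤ 7 / α := by
  have hlogM : 1 < log M := (one_lt_exp_iff.mpr one_pos).trans_le hM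
  have hL2 : 1 ≤ log (log M) := by
    rw [← log_exp 1]; exact log_le_log (exp_pos 1) hM
  have hlogy : log (log M ^ α) = α * log (log M) := log_rpow (by linarith) α
  have hloga : log a / log M ≤ 1 := by
    rw [div_le_one (by linarith)]
    exact log_le_log (by exact_mod_cast ha) haM
  calc ∑ p ∈ a.primeFactors.filter (fun p : ℕ => log M ^ α < p), ((p : ℝ) - 1)⁻¹
      ≤ 2 / log (log M ^ α) * ∑ p ∈ a.primeFactors, log p / p :=
        sum_filter_lt_inv_sub_one_le (fun p hp => (Nat.prime_of_mem_primeFactors hp).one_lt)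
          (one_lt_rpow hlogM hα)
    _ ≤ 2 / (α * log (log M)) * (log (log M) + log 4 + 1) := by
        rw [hlogy]
        gcongr
        linarith [sum_primeFactors_log_div_self_le hlogM.le a]
    _ ≤ 7 / α := by
        rw [div_mul_eq_mul_div, div_le_div_iff₀ (by positivity) hα]
        nlinarith [log_four_lt]

theorem div_totient_pow_le {α M : ℝ} (hα : 0 < α) {a : ℕ} (ha : 0 < a) (haM : (a : ℝ) ≤ M)
    {s : ℕ} (hs : 1 ≤ s) :
    ((a : ℝ) / a.totient) ^ s ≤ exp (9 + 7 / α) ^ s *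
      (1 + ∑ p ∈ (Nat.primesLE ⌊log M ^ α⌋₊).filter (· ∣ a), log p ^ s / p) := by
  have hsum : 0 ≤ ∑ p ∈ (Nat.primesLE ⌊log M ^ α⌋₊).filter (· ∣ a), log p ^ s / p :=
    sum_nonneg fun _ _ => by positivity
  rcases le_or_gt (exp 1) (log M) with hM | hM
  · set y := log M ^ α
    have hsmall : a.primeFactors.filter (fun p : ℕ => ¬ y < p) =
        (Nat.primesLE ⌊y⌋₊).filter (· ∣ a) := by
      ext p
      simp only [mem_filter, Nat.mem_primeFactors, Nat.mem_primesLE, not_lt]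
      rw [Nat.le_floor_iff (rpow_nonneg ((exp_pos 1).le.trans hM) α)]
      have := ha.ne'
      tauto
    have hlarge := (prod_inv_one_sub_inv_le_exp fun p hp =>
        (Nat.prime_of_mem_primeFactors (mem_filter.mp hp).1).one_lt).trans
      (exp_le_exp.mpr (sum_primeFactors_filter_lt_rpow_inv_sub_one_le hα hM ha haM))
    rw [div_totient_eq_prod ha.ne', ← prod_filter_not_mul_prod_filter _ (fun p : ℕ => y < p),
      hsmall, mul_pow, exp_add, mul_pow, mul_right_comm]
    exact mul_le_mul (prod_inv_one_sub_inv_pow_le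
        (fun p hp => Nat.prime_of_mem_primesLE (mem_filter.mp hp).1) hs)
      (pow_le_pow_left₀ (prod_inv_one_sub_inv_nonneg _) hlarge s)
      (pow_nonneg (prod_inv_one_sub_inv_nonneg _) s) (by positivity)
  · have hφ : (1 : ℝ) ≤ a.totient := by exact_mod_cast Nat.totient_pos.mpr ha
    have hM0 : (0 : ℝ) < M := by linarith [(Nat.one_le_cast (α := ℝ)).mpr ha]
    have hMe : M < exp (exp 1) := (log_lt_iff_lt_exp hM0).mp hM
    have he : exp 1 ≤ 9 + 7 / α := by linarith [exp_one_lt_d9, (by positivity : 0 ≤ 7 / α)]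
    calc ((a : ℝ) / a.totient) ^ s ≤ exp (9 + 7 / α) ^ s := by
          refine pow_le_pow_left₀ (by positivity) ?_ s
          calc (a : ℝ) / a.totient ≤ a := div_le_self (Nat.cast_nonneg a) hφ
            _ ≤ exp (9 + 7 / α) := by linarith [exp_le_exp.mpr he]
      _ ≤ _ := le_mul_of_one_le_right (by positivity) (by linarith)

lemma sum_sum_filter_eq_sum_card_mul {ι κ R : Type*} [NonAssocSemiring R] (s : Finset ι)
    (t : Finset κ) (r : ι → κ → Prop) [∀ i j, Decidable (r i j)] (f : κ → R) :
    ∑ i ∈ s, ∑ j ∈ t.filter (r i), f j = ∑ j ∈ t, (s.filter (r · j)).card * f j := by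
  simp_rw [sum_filter]
  rw [sum_comm]
  refine sum_congr rfl fun j _ => ?_
  rw [← sum_filter, sum_const, nsmul_eq_mul]

end Romanoff

theorem romanoff_T1_general (α : ℝ) (hα0 : 0 < α) :
    ∃ C : ℝ, 0 < C ∧
      ∀ (M : ℝ), 1 ≤ M → ∀ (N : ℕ) (a : ℕ → ℕ),
        (∀ n, 1 ≤ n → n ≤ N → 0 < a n ∧ (a n : ℝ) ≤ M) →
        ∀ s : ℕ, 0 < s →
          ∑ n ∈ Finset.Icc 1 N, ((a n : ℝ) / ((a n).totient : ℝ)) ^ s ≤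
            C ^ s * ((N : ℝ) +
              ∑ p ∈ (Finset.range (⌊(Real.log M) ^ α⌋₊ + 1)).filter Nat.Prime,
                (((Finset.Icc 1 N).filter (fun n => p ∣ a n)).card : ℝ) *
                  (Real.log p) ^ s / (p : ℝ)) := by
  refine ⟨exp (9 + 7 / α), exp_pos _, fun M _ N a ha s hs => ?_⟩
  calc ∑ n ∈ Icc 1 N, ((a n : ℝ) / (a n).totient) ^ s
      ≤ ∑ n ∈ Icc 1 N, exp (9 + 7 / α) ^ s *
          (1 + ∑ p ∈ (Nat.primesLE ⌊log M ^ α⌋₊).filter (· ∣ a n), log p ^ s / p) :=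
        sum_le_sum fun n hn => by
          obtain ⟨hn1, hnN⟩ := mem_Icc.mp hn
          exact Romanoff.div_totient_pow_le hα0 (ha n hn1 hnN).1 (ha n hn1 hnN).2 hs
    _ = _ := by
        rw [← mul_sum, sum_add_distrib, Romanoff.sum_sum_filter_eq_sum_card_mul, sum_const,
          Nat.card_Icc, nsmul_one, Nat.add_sub_cancel]
        simp only [mul_div_assoc]
        rfl

/-- For `0 < α < 1` there is `C(α) > 0` such that for all reals `M ≥ 1`,
all finite lists `a 1, …, a N` of positive integers bounded by `M`, and all positive
integers `s`,
`∑_{n=1}^N (a n / φ(a n))^s ≤ C^s (N + ∑_{p ≤ (ln M)^α} ω(p) (ln p)^s / p)`,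
where `ω(d) = #{1 ≤ n ≤ N : d ∣ a n}`. -/
theorem romanoff_T1 (α : ℝ) (hα0 : 0 < α) (hα1 : α < 1) :
    ∃ C : ℝ, 0 < C ∧
      ∀ (M : ℝ), 1 ≤ M → ∀ (N : ℕ) (a : ℕ → ℕ),
        (∀ n, 1 ≤ n → n ≤ N → 0 < a n ∧ (a n : ℝ) ≤ M) →
        ∀ s : ℕ, 0 < s →
          ∑ n ∈ Finset.Icc 1 N, ((a n : ℝ) / ((a n).totient : ℝ)) ^ s ≤
            C ^ s * ((N : ℝ) +
              ∑ p ∈ (Finset.range (⌊(Real.log M) ^ α⌋₊ + 1)).filter Nat.Prime,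
                (((Finset.Icc 1 N).filter (fun n => p ∣ a n)).card : ℝ) *
                  (Real.log p) ^ s / (p : ℝ)) :=
  romanoff_T1_general α hα0
end

section
/- Let n be a positive integer. Then ∏_{p prime, p | n, p > ln n} (1 + 1/p) ≤ 5. -/
lemma romanoff_pf1 : Nat.primeFactors 1 = ∅ := Nat.primeFactors_one
lemma romanoff_pf2 : Nat.primeFactors 2 = {2} := Nat.Prime.primeFactors (by norm_num)
lemma romanoff_pf3 : Nat.primeFactors 3 = {3} := Nat.Prime.primeFactors (by norm_num)
lemma romanoff_pf4 : Nat.primeFactors 4 = {2} := by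
  rw [show (4:ℕ) = 2^2 from rfl, Nat.primeFactors_pow _ (by norm_num),
    Nat.Prime.primeFactors (by norm_num)]
lemma romanoff_pf5 : Nat.primeFactors 5 = {5} := Nat.Prime.primeFactors (by norm_num)
lemma romanoff_pf6 : Nat.primeFactors 6 = {2, 3} := by
  rw [show (6:ℕ) = 2*3 from rfl, Nat.primeFactors_mul (by norm_num) (by norm_num),
    Nat.Prime.primeFactors (by norm_num), Nat.Prime.primeFactors (by norm_num)]
  rfl
lemma romanoff_pf7 : Nat.primeFactors 7 = {7} := Nat.Prime.primeFactors (by norm_num)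

/-- Lemma 2 of the paper. For a positive integer `n`,
`∏_{p ∣ n, p > ln n} (1 + 1/p) ≤ 5`. -/
theorem romanoff_L2 (n : ℕ) (hn : 0 < n) :
    ∏ p ∈ n.primeFactors.filter (fun p : ℕ => Real.log n < (p : ℝ)), (1 + 1 / (p : ℝ)) ≤ 5 := by
  set S := n.primeFactors.filter (fun p : ℕ => Real.log n < (p : ℝ)) with hS
  rcases le_or_gt n 7 with h7 | h8
  · have hstep : ∏ p ∈ S, (1 + 1/(p:ℝ)) ≤ ∏ p ∈ n.primeFactors, (1 + 1/(p:ℝ)) := by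
      rw [hS, Finset.prod_filter]
      apply Finset.prod_le_prod
      · intro p _
        split <;> positivity
      · intro p _
        have h0 : (0:ℝ) ≤ 1/(p:ℝ) := by positivity
        split <;> linarith
    refine hstep.trans ?_
    interval_cases n <;>
      norm_num [romanoff_pf1, romanoff_pf2, romanoff_pf3, romanoff_pf4, romanoff_pf5,
        romanoff_pf6, romanoff_pf7, Finset.prod_insert, Finset.prod_singleton]
  · have hn8 : (8:ℝ) ≤ n := by exact_mod_cast h8
    have hlog2 : (0.6931471803:ℝ) < Real.log 2 := Real.log_two_gt_d9
    have hL2 : (2:ℝ) < Real.log n := by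
      have h1 : Real.log 8 ≤ Real.log n := Real.log_le_log (by norm_num) hn8
      have h2 : Real.log 8 = 3 * Real.log 2 := by
        rw [show (8:ℝ) = 2^3 by norm_num, Real.log_pow]; push_cast; ring
      nlinarith
    set L := Real.log n with hLdef
    have hprimepos : ∀ p ∈ S, L < (p:ℝ) := fun p hp => (Finset.mem_filter.mp hp).2
    have hdvd : (∏ p ∈ S, p) ∣ n :=
      (Finset.prod_dvd_prod_of_subset _ _ _ (Finset.filter_subset _ _)).trans
        (Nat.prod_primeFactors_dvd n)
    have hprodle : (∏ p ∈ S, (p:ℝ)) ≤ n := by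
      have h := Nat.le_of_dvd hn hdvd
      rw [← Nat.cast_prod]
      exact_mod_cast h
    set k := S.card with hk
    have hLk : L ^ k ≤ ∏ p ∈ S, (p:ℝ) := by
      rw [← Finset.prod_const]
      exact Finset.prod_le_prod (fun p hp => by positivity) (fun p hp => (hprimepos p hp).le)
    have hklogL : (k:ℝ) * Real.log L ≤ L := by
      have h1 : Real.log (L^k) ≤ Real.log n :=
        Real.log_le_log (by positivity) (hLk.trans hprodle)
      rwa [Real.log_pow] at h1
    have hlogL : (2/3:ℝ) < Real.log L := by
      have : Real.log 2 ≤ Real.log L := Real.log_le_log (by norm_num) hL2.le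
      nlinarith
    have hkL : (k:ℝ) / L ≤ 3/2 := by
      rw [div_le_iff₀ (by linarith : (0:ℝ) < L)]
      nlinarith [Nat.cast_nonneg (α := ℝ) k]
    have hexp32 : Real.exp (3/2) ≤ 5 := by
      have h3 : Real.exp 3 = Real.exp 1 ^ 3 := by
        rw [← Real.exp_nat_mul]; norm_num
      have hsq : Real.exp (3/2) * Real.exp (3/2) = Real.exp 3 := by
        rw [← Real.exp_add]; norm_num
      have he : Real.exp 1 < 2.7182818286 := Real.exp_one_lt_d9
      have he0 : (0:ℝ) < Real.exp 1 := Real.exp_pos 1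
      have hcube : Real.exp 3 < 25 := by
        have := pow_lt_pow_left₀ he he0.le (n := 3) (by norm_num)
        rw [← h3] at this
        nlinarith
      nlinarith [Real.exp_pos (3/2 : ℝ)]
    calc ∏ p ∈ S, (1 + 1/(p:ℝ)) ≤ ∏ p ∈ S, Real.exp (1/(p:ℝ)) := by
          apply Finset.prod_le_prod
          · intro p hp; positivity
          · intro p hp
            have := Real.add_one_le_exp (1/(p:ℝ))
            linarith
      _ = Real.exp (∑ p ∈ S, 1/(p:ℝ)) := (Real.exp_sum _ _).symm
      _ ≤ Real.exp (3/2) := by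
          apply Real.exp_le_exp.mpr
          have hsum : (∑ p ∈ S, 1/(p:ℝ)) ≤ ∑ _p ∈ S, 1/L := by
            apply Finset.sum_le_sum
            intro p hp
            exact one_div_le_one_div_of_le (by linarith) (hprimepos p hp).le
          have hconst : (∑ _p ∈ S, (1/L:ℝ)) = k / L := by
            rw [Finset.sum_const, hk]; ring
          linarith
      _ ≤ 5 := hexp32
end

section
/- Let α be a real number with 0 < α < 1. Then there exists a constant C(α) > 0, depending only on α, such that for every positive integer n, n/φ(n) ≤ C(α) · ∏_{p prime, p | n, p ≤ (ln n)^α} (1 + 1/p). -/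
/-!
Write `n / φ n = ∏_{p ∣ n} (1 + 1/(p² - 1)) (1 + 1/p)`. The first factors multiply to at most
`e²`, since `∑ 1/(p² - 1) ≤ ∑ 2/p² ≤ 2`. The factors `1 + 1/p` with `p > (log n)^α` multiply to at
most `exp (∑ 1/p)`, and this sum is bounded in terms of `α` alone: if `c_j` prime divisors of `n`
lie in the dyadic block `[2^j, 2^(j+1))`, then `2^(j c_j) ≤ n` and, by the primorial bound
`x# ≤ 4^x`, also `2^(j c_j) ≤ 4^(2^(j+1))`, so the block contributes at most
`min (4, log₂ n / 2^j) / j`. Summing over `j ≥ m ≈ α log₂ log n` gives `O(log log n / m) = O(1/α)`.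
Small `n` are absorbed into the constant, as `n / φ n ≤ n`.
-/

open Finset Real

lemma Real.prod_one_add_le_exp_sum_of_nonneg {ι : Type*} {s : Finset ι} {f : ι → ℝ}
    (hf : ∀ i ∈ s, 0 ≤ f i) : ∏ i ∈ s, (1 + f i) ≤ exp (∑ i ∈ s, f i) := by
  rw [exp_sum]
  exact prod_le_prod (fun i hi ↦ by linarith [hf i hi]) fun i _ ↦ by
    linarith [add_one_le_exp (f i)]

lemma sum_min_div_two_pow_le (s : Finset ℕ) {a : ℝ} (ha : 0 ≤ a) (T : ℕ) :
    ∑ j ∈ s, min a (T / 2 ^ j) ≤ a * (Nat.log 2 T + 1) + 2 := by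
  set J := Nat.log 2 T
  rw [← sum_filter_add_sum_filter_not s (· ≤ J)]
  have hsmall : ∑ j ∈ s with j ≤ J, min a ((T : ℝ) / 2 ^ j) ≤ a * (J + 1) := by
    have hcard : #{j ∈ s | j ≤ J} ≤ J + 1 := by
      simpa using card_le_card fun j hj ↦ mem_range_succ_iff.2 (mem_filter.1 hj).2
    calc ∑ j ∈ s with j ≤ J, min a ((T : ℝ) / 2 ^ j)
        ≤ #{j ∈ s | j ≤ J} • a := sum_le_card_nsmul _ _ _ fun _ _ ↦ min_le_left _ _
      _ ≤ a * (J + 1) := by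
        rw [nsmul_eq_mul, mul_comm]
        gcongr
        exact_mod_cast hcard
  -- Beyond `J` the terms `T / 2 ^ j` form a geometric tail starting below `1`.
  have hlarge : ∑ j ∈ s with ¬ j ≤ J, min a ((T : ℝ) / 2 ^ j) ≤ 2 := by
    have hsub : {j ∈ s | ¬ j ≤ J} ⊆ Ico (J + 1) (s.sup id + 1) := fun j hj ↦ by
      have := s.subset_range_sup_succ (mem_filter.1 hj).1
      simp only [mem_filter, mem_range, mem_Ico] at hj this ⊢
      omega
    have hT : (T : ℝ) < 2 ^ (J + 1) := by exact_mod_cast Nat.lt_pow_succ_log_self one_lt_two T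
    calc ∑ j ∈ s with ¬ j ≤ J, min a ((T : ℝ) / 2 ^ j)
        ≤ ∑ j ∈ Ico (J + 1) (s.sup id + 1), (T : ℝ) * (1 / 2) ^ j :=
          sum_le_sum_of_subset_of_nonneg hsub (fun _ _ _ ↦ by positivity) |>.trans' <|
            sum_le_sum fun j _ ↦
              (min_le_right _ _).trans_eq (by rw [one_div, inv_pow, div_eq_mul_inv])
      _ = T * ∑ j ∈ Ico (J + 1) (s.sup id + 1), (1 / 2 : ℝ) ^ j := by rw [mul_sum]
      _ ≤ T * ((1 / 2) ^ (J + 1) / (1 - 1 / 2)) := by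
          gcongr; exact geom_sum_Ico_le_of_lt_one (by norm_num) (by norm_num)
      _ = 2 * (T / 2 ^ (J + 1)) := by rw [one_div, inv_pow]; ring
      _ ≤ 2 := by
          have : (T : ℝ) / 2 ^ (J + 1) ≤ 1 := (div_le_one (by positivity)).2 hT.le
          linarith
  linarith

namespace Nat

lemma two_pow_mul_card_le_prod {S : Finset ℕ} {j : ℕ} (h : ∀ p ∈ S, 2 ^ j ≤ p) :
    2 ^ (j * #S) ≤ ∏ p ∈ S, p := by
  rw [pow_mul]
  exact S.pow_card_le_prod _ _ h

lemma mul_card_le_of_prime_of_log_eq {S : Finset ℕ} {j : ℕ}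
    (hS : ∀ p ∈ S, p.Prime ∧ Nat.log 2 p = j) : j * #S ≤ 2 ^ (j + 2) := by
  have hlt : ∀ p ∈ S, p < 2 ^ (j + 1) := fun p hp ↦
    (hS p hp).2 ▸ Nat.lt_pow_succ_log_self one_lt_two p
  have hdvd : ∏ p ∈ S, p ∣ primorial (2 ^ (j + 1)) :=
    prod_dvd_prod_of_subset _ _ _ fun p hp ↦
      mem_filter.2 ⟨mem_range.2 (by linarith [hlt p hp]), (hS p hp).1⟩
  refine (Nat.pow_le_pow_iff_right one_lt_two).1 ?_
  calc 2 ^ (j * #S) ≤ ∏ p ∈ S, p :=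
        two_pow_mul_card_le_prod fun p hp ↦
          (hS p hp).2 ▸ Nat.pow_log_le_self 2 (hS p hp).1.ne_zero
    _ ≤ primorial (2 ^ (j + 1)) := Nat.le_of_dvd (primorial_pos _) hdvd
    _ ≤ 4 ^ 2 ^ (j + 1) := primorial_le_four_pow _
    _ = 2 ^ 2 ^ (j + 2) := by rw [show 4 = 2 ^ 2 from rfl, ← pow_mul]; ring

lemma mul_card_le_log_of_subset_primeFactors {n j : ℕ} {S : Finset ℕ} (hn : n ≠ 0)
    (hS : S ⊆ n.primeFactors) (h : ∀ p ∈ S, 2 ^ j ≤ p) : j * #S ≤ Nat.log 2 n := by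
  refine Nat.le_log_of_pow_le one_lt_two ((two_pow_mul_card_le_prod h).trans ?_)
  exact Nat.le_of_dvd (pos_of_ne_zero hn)
    ((prod_dvd_prod_of_subset _ _ _ hS).trans (prod_primeFactors_dvd n))

lemma sum_inv_le_of_subset_primeFactors_of_log_eq {n j : ℕ} {S : Finset ℕ} (hn : n ≠ 0)
    (hj : 0 < j) (hS : S ⊆ n.primeFactors) (hlog : ∀ p ∈ S, Nat.log 2 p = j) :
    ∑ p ∈ S, 1 / (p : ℝ) ≤ min 4 ((Nat.log 2 n : ℝ) / 2 ^ j) / j := by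
  have hprime : ∀ p ∈ S, p.Prime := fun p hp ↦ prime_of_mem_primeFactors (hS hp)
  have h2j : ∀ p ∈ S, 2 ^ j ≤ p := fun p hp ↦
    hlog p hp ▸ Nat.pow_log_le_self 2 (hprime p hp).ne_zero
  have hcheb : (j * #S : ℝ) ≤ 2 ^ (j + 2) := by
    exact_mod_cast mul_card_le_of_prime_of_log_eq fun p hpS ↦ ⟨hprime p hpS, hlog p hpS⟩
  have hdiv : (j * #S : ℝ) ≤ Nat.log 2 n := by
    exact_mod_cast mul_card_le_log_of_subset_primeFactors hn hS h2j
  have hpos : (0 : ℝ) < 2 ^ j := by positivity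
  calc ∑ p ∈ S, 1 / (p : ℝ) ≤ #S • (1 / 2 ^ j) := sum_le_card_nsmul _ _ _ fun p hp ↦
        one_div_le_one_div_of_le hpos (by exact_mod_cast h2j p hp)
    _ = (j * #S : ℝ) / 2 ^ j / j := by
        rw [nsmul_eq_mul]; field_simp
    _ ≤ min 4 ((Nat.log 2 n : ℝ) / 2 ^ j) / j := by
        refine div_le_div_of_nonneg_right
          (le_min ?_ (div_le_div_of_nonneg_right hdiv hpos.le)) j.cast_nonneg
        rw [div_le_iff₀ hpos]
        linarith [show (2 : ℝ) ^ (j + 2) = 4 * 2 ^ j by ring]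

lemma sum_inv_primeFactors_two_pow_le {n m : ℕ} (hn : n ≠ 0) (hm : 0 < m) :
    ∑ p ∈ n.primeFactors with 2 ^ m ≤ p, 1 / (p : ℝ) ≤
      (4 * (Nat.log 2 (Nat.log 2 n) + 1) + 2) / m := by
  set S := {p ∈ n.primeFactors | 2 ^ m ≤ p}
  have hlog : ∀ p ∈ S, m ≤ Nat.log 2 p := fun p hp ↦
    Nat.le_log_of_pow_le one_lt_two (mem_filter.1 hp).2
  have hblock : ∀ j ∈ S.image (Nat.log 2),
      ∑ p ∈ S with Nat.log 2 p = j, 1 / (p : ℝ) ≤ min 4 ((Nat.log 2 n : ℝ) / 2 ^ j) / m := by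
    intro j hj
    obtain ⟨p, hp, rfl⟩ := mem_image.1 hj
    refine (sum_inv_le_of_subset_primeFactors_of_log_eq hn (hm.trans_le (hlog p hp))
      ((filter_subset _ _).trans (filter_subset _ _)) fun q hq ↦ (mem_filter.1 hq).2).trans ?_
    gcongr
    exact hlog p hp
  calc ∑ p ∈ S, 1 / (p : ℝ)
      = ∑ j ∈ S.image (Nat.log 2), ∑ p ∈ S with Nat.log 2 p = j, 1 / (p : ℝ) :=
        (sum_fiberwise_of_maps_to (fun p hp ↦ mem_image_of_mem _ hp) _).symm
    _ ≤ ∑ j ∈ S.image (Nat.log 2), min 4 ((Nat.log 2 n : ℝ) / 2 ^ j) / m := sum_le_sum hblock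
    _ ≤ (4 * (Nat.log 2 (Nat.log 2 n) + 1) + 2) / m := by
        rw [← sum_div]
        gcongr
        exact sum_min_div_two_pow_le _ (by norm_num) _

lemma cast_div_totient_eq_prod {n : ℕ} (hn : n ≠ 0) :
    (n : ℝ) / n.totient =
      ∏ p ∈ n.primeFactors, (1 + 1 / ((p : ℝ) ^ 2 - 1)) * (1 + 1 / (p : ℝ)) := by
  have hφ : (n.totient : ℝ) = n * ∏ p ∈ n.primeFactors, (1 - (p : ℝ)⁻¹) := by
    have h := congrArg ((↑) : ℚ → ℝ) (totient_eq_mul_prod_factors n)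
    push_cast at h
    exact h
  rw [hφ, div_mul_cancel_left₀ (by exact_mod_cast hn), ← prod_inv_distrib]
  refine prod_congr rfl fun p hp ↦ ?_
  have hp : (2 : ℝ) ≤ p := by exact_mod_cast (Nat.prime_of_mem_primeFactors hp).two_le
  have : (p : ℝ) ^ 2 - 1 ≠ 0 := by nlinarith
  have : (p : ℝ) - 1 ≠ 0 := by linarith
  field_simp
  ring

lemma prod_primeFactors_one_add_inv_sq_sub_one_le (n : ℕ) :
    ∏ p ∈ n.primeFactors, (1 + 1 / ((p : ℝ) ^ 2 - 1)) ≤ exp 2 := by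
  have hp : ∀ p ∈ n.primeFactors, (2 : ℝ) ≤ p := fun p hp ↦ by
    exact_mod_cast (Nat.prime_of_mem_primeFactors hp).two_le
  refine (prod_one_add_le_exp_sum_of_nonneg fun p hp' ↦ ?_).trans (exp_le_exp.2 ?_)
  · have : (0 : ℝ) < (p : ℝ) ^ 2 - 1 := by nlinarith [hp p hp']
    positivity
  calc ∑ p ∈ n.primeFactors, 1 / ((p : ℝ) ^ 2 - 1)
      ≤ ∑ p ∈ n.primeFactors, 2 * ((p : ℝ) ^ 2)⁻¹ := sum_le_sum fun p hp' ↦ by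
        have := hp p hp'
        rw [← div_eq_mul_inv, div_le_div_iff₀ (by nlinarith) (by positivity)]
        nlinarith
    _ ≤ 2 * ∑ i ∈ Ioo 1 (n + 1), ((i : ℝ) ^ 2)⁻¹ := by
        rw [← mul_sum]
        gcongr
        intro p hp'
        have := Nat.le_of_mem_primeFactors hp'
        have := (Nat.prime_of_mem_primeFactors hp').two_le
        exact mem_Ioo.2 ⟨by omega, by omega⟩
    _ ≤ 2 := by
        have := sum_Ioo_inv_sq_le (α := ℝ) 1 (n + 1)
        norm_num at this
        linarith

end Nat

lemma sum_inv_primeFactors_gt_rpow_log_le {α : ℝ} (hα : 0 < α) {n : ℕ}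
    (hn : 2 ^ (2 / α) ≤ log n) :
    ∑ p ∈ n.primeFactors.filter (fun p : ℕ => ¬ (p : ℝ) ≤ log n ^ α), 1 / (p : ℝ) ≤
      8 / α + 10 := by
  set L := log n ^ α
  set x := logb 2 (log n)
  set m := Nat.log 2 ⌊L⌋₊
  set J := Nat.log 2 (Nat.log 2 n)
  have hlogn : 1 ≤ log n := (one_le_rpow one_le_two (by positivity)).trans hn
  have hn1 : 1 < n := by
    by_contra! h
    interval_cases n <;> simp at hlogn <;> linarith
  have hL : 1 ≤ L := one_le_rpow hlogn hα.le
  have hx : 2 / α ≤ x := (le_logb_iff_rpow_le one_lt_two (by linarith)).2 hn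
  have hαx : 2 ≤ α * x := by rwa [div_le_iff₀' hα] at hx
  have hm : α * x < m + 1 := by
    have hfloor : L < 2 ^ ((m : ℝ) + 1) := by
      have := Nat.lt_pow_succ_log_self one_lt_two ⌊L⌋₊
      calc L < ⌊L⌋₊ + 1 := Nat.lt_floor_add_one L
        _ ≤ 2 ^ ((m : ℝ) + 1) := by norm_cast
    rwa [← logb_lt_iff_lt_rpow one_lt_two (by linarith), logb_rpow_eq_mul_logb_of_pos
      (by linarith)] at hfloor
  have hJ : J ≤ x + 1 := by
    have hlog2 : 1 / 2 < log 2 := by linarith [log_two_gt_d9]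
    calc (J : ℝ) ≤ logb 2 (Nat.log 2 n) := natLog_le_logb _ _
      _ ≤ logb 2 (2 * log n) := by
          have hpos : (0 : ℝ) < Nat.log 2 n := by exact_mod_cast Nat.log_pos one_lt_two hn1
          refine (logb_le_logb one_lt_two hpos (by linarith)).2 ?_
          calc (Nat.log 2 n : ℝ) ≤ logb 2 n := natLog_le_logb _ _
            _ ≤ 2 * log n := by
                rw [logb, div_le_iff₀ (by linarith)]; nlinarith
      _ = x + 1 := by rw [logb_mul two_ne_zero (by linarith), logb_self_eq_one one_lt_two]; ring
  have hm0 : (0 : ℝ) < m := by linarith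
  have h2m : ((2 ^ m : ℕ) : ℝ) ≤ L :=
    (Nat.cast_le.2 (Nat.pow_log_le_self 2 (Nat.floor_pos.2 hL).ne')).trans
      (Nat.floor_le (by linarith))
  have hsub : n.primeFactors.filter (fun p : ℕ => ¬ (p : ℝ) ≤ L) ⊆
      {p ∈ n.primeFactors | 2 ^ m ≤ p} := fun p hp ↦ by
    simp only [mem_filter, not_le] at hp ⊢
    exact ⟨hp.1, by exact_mod_cast h2m.trans hp.2.le⟩
  calc ∑ p ∈ n.primeFactors.filter (fun p : ℕ => ¬ (p : ℝ) ≤ L), 1 / (p : ℝ)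
      ≤ ∑ p ∈ n.primeFactors with 2 ^ m ≤ p, 1 / (p : ℝ) :=
        sum_le_sum_of_subset_of_nonneg hsub fun _ _ _ ↦ by positivity
    _ ≤ (4 * (J + 1) + 2) / m :=
        Nat.sum_inv_primeFactors_two_pow_le (by omega) (by exact_mod_cast hm0)
    _ ≤ 8 / α + 10 := by
        rw [div_le_iff₀ hm0]
        have : 4 * x ≤ 8 / α * m := by
          rw [div_mul_eq_mul_div, le_div_iff₀ hα]; linarith
        nlinarith

theorem romanoff_L3_general (α : ℝ) (hα0 : 0 < α) :
    ∃ C : ℝ, 0 < C ∧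
      ∀ n : ℕ, 0 < n →
        (n : ℝ) / (n.totient : ℝ) ≤
          C * ∏ p ∈ n.primeFactors.filter (fun p : ℕ => (p : ℝ) ≤ (Real.log n) ^ α),
            (1 + 1 / (p : ℝ)) := by
  refine ⟨max (exp (2 ^ (2 / α))) (exp (8 / α + 12)), by positivity, fun n hn ↦ ?_⟩
  set P := ∏ p ∈ n.primeFactors.filter (fun p : ℕ => (p : ℝ) ≤ log n ^ α), (1 + 1 / (p : ℝ))
  have hP : 1 ≤ P := one_le_prod fun p _ ↦ by simp only [le_add_iff_nonneg_right]; positivity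
  by_cases hsmall : log n < 2 ^ (2 / α)
  · calc (n : ℝ) / n.totient ≤ n :=
          div_le_self n.cast_nonneg (by exact_mod_cast Nat.totient_pos.2 hn)
      _ = exp (log n) := (exp_log (by exact_mod_cast hn)).symm
      _ ≤ max (exp (2 ^ (2 / α))) (exp (8 / α + 12)) :=
          (exp_le_exp.2 hsmall.le).trans (le_max_left _ _)
      _ ≤ max (exp (2 ^ (2 / α))) (exp (8 / α + 12)) * P :=
          le_mul_of_one_le_right (by positivity) hP
  · rw [Nat.cast_div_totient_eq_prod hn.ne', prod_mul_distrib,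
      ← prod_filter_mul_prod_filter_not _ (fun p : ℕ => (p : ℝ) ≤ log n ^ α)
      fun p ↦ 1 + 1 / (p : ℝ)]
    calc (∏ p ∈ n.primeFactors, (1 + 1 / ((p : ℝ) ^ 2 - 1))) * (P *
          ∏ p ∈ n.primeFactors.filter (fun p : ℕ => ¬ (p : ℝ) ≤ log n ^ α), (1 + 1 / (p : ℝ)))
        ≤ exp 2 * (P * exp (8 / α + 10)) := by
          gcongr
          · exact Nat.prod_primeFactors_one_add_inv_sq_sub_one_le n
          · exact (prod_one_add_le_exp_sum _ fun p ↦ by positivity).trans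
              (exp_le_exp.2 (sum_inv_primeFactors_gt_rpow_log_le hα0 (not_lt.1 hsmall)))
      _ = exp (8 / α + 12) * P := by
          rw [mul_left_comm, ← exp_add, mul_comm]; congr 2; ring
      _ ≤ max (exp (2 ^ (2 / α))) (exp (8 / α + 12)) * P := by gcongr; exact le_max_right _ _

/-- Lemma 3 of the paper. For `0 < α < 1` there is `C(α) > 0` such
that for every positive integer `n`,
`n/φ(n) ≤ C(α) ∏_{p ∣ n, p ≤ (ln n)^α} (1 + 1/p)`. -/
theorem romanoff_L3 (α : ℝ) (hα0 : 0 < α) (hα1 : α < 1) :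
    ∃ C : ℝ, 0 < C ∧
      ∀ n : ℕ, 0 < n →
        (n : ℝ) / (n.totient : ℝ) ≤
          C * ∏ p ∈ n.primeFactors.filter (fun p : ℕ => (p : ℝ) ≤ (Real.log n) ^ α),
            (1 + 1 / (p : ℝ)) :=
  romanoff_L3_general α hα0
end

section
/- Let s be a positive integer and x a real number with x ≥ 1. Then ∫_{x}^{+∞} t^{s−1} e^{−t} dt ≤ s! · x^{s−1} · e^{−x}. -/
/-!
Integrating by parts, `I n x = ∫_x^∞ t^n e^{-t} dt` satisfies
`I (n+1) x = x^(n+1) e^{-x} + (n+1) I n x`, with `I 0 x = e^{-x}`. For `x ≥ 1` the powers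
`x^n` increase with `n`, so induction gives `I n x ≤ (n+1)! x^n e^{-x}`, using
`1 + (n+1)·(n+1)! ≤ (n+2)!`.
-/

open MeasureTheory Set Real Filter Topology Nat

theorem integrableOn_pow_mul_exp_neg_Ioi (n : ℕ) (x : ℝ) :
    IntegrableOn (fun t : ℝ => t ^ n * exp (-t)) (Ioi x) := by
  have hGamma : IntegrableOn (fun t : ℝ => t ^ n * exp (-t)) (Ioi 0) := by
    simpa [mul_comm] using GammaIntegral_convergent (s := n + 1) (by positivity)
  have hIcc : IntegrableOn (fun t : ℝ => t ^ n * exp (-t)) (Icc x 0) :=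
    (by fun_prop : Continuous fun t : ℝ => t ^ n * exp (-t)).integrableOn_Icc
  exact (hIcc.union hGamma).mono_set fun t (ht : x < t) => by
    rcases le_or_gt t 0 with h | h
    exacts [Or.inl ⟨ht.le, h⟩, Or.inr h]

theorem integral_Ioi_pow_succ_mul_exp_neg (n : ℕ) (x : ℝ) :
    ∫ t in Ioi x, t ^ (n + 1) * exp (-t) =
      x ^ (n + 1) * exp (-x) + (n + 1) * ∫ t in Ioi x, t ^ n * exp (-t) := by
  have hderiv (t : ℝ) : HasDerivAt (fun t : ℝ => -(t ^ (n + 1) * exp (-t)))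
      (t ^ (n + 1) * exp (-t) - (n + 1) * (t ^ n * exp (-t))) t := by
    refine ((hasDerivAt_pow (n + 1) t).mul (hasDerivAt_neg t).exp).neg.congr_deriv ?_
    simp only [add_tsub_cancel_right, Nat.cast_add, Nat.cast_one, mul_neg, mul_one]
    ring
  have hdecay : Tendsto (fun t : ℝ => -(t ^ (n + 1) * exp (-t))) atTop (𝓝 0) := by
    simpa using (tendsto_pow_mul_exp_neg_atTop_nhds_zero (n + 1)).neg
  have hFTC := integral_Ioi_of_hasDerivAt_of_tendsto' (fun t _ => hderiv t)
    ((integrableOn_pow_mul_exp_neg_Ioi (n + 1) x).sub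
      ((integrableOn_pow_mul_exp_neg_Ioi n x).const_mul _)) hdecay
  rw [integral_sub (integrableOn_pow_mul_exp_neg_Ioi (n + 1) x)
    ((integrableOn_pow_mul_exp_neg_Ioi n x).const_mul _), integral_const_mul] at hFTC
  linarith

theorem integral_Ioi_pow_mul_exp_neg_le (n : ℕ) {x : ℝ} (hx : 1 ≤ x) :
    ∫ t in Ioi x, t ^ n * exp (-t) ≤ (n + 1)! * x ^ n * exp (-x) := by
  induction n with
  | zero => simpa only [pow_zero, one_mul, zero_add, factorial_one, Nat.cast_one] using
      (integral_exp_neg_Ioi x).le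
  | succ n ih =>
    have hpow : x ^ n ≤ x ^ (n + 1) := pow_le_pow_right₀ hx n.le_succ
    have hfact : (1 : ℝ) ≤ (n + 1)! := by exact_mod_cast (n + 1).factorial_pos
    calc ∫ t in Ioi x, t ^ (n + 1) * exp (-t)
        = x ^ (n + 1) * exp (-x) + (n + 1) * ∫ t in Ioi x, t ^ n * exp (-t) :=
          integral_Ioi_pow_succ_mul_exp_neg n x
      _ ≤ x ^ (n + 1) * exp (-x) + (n + 1) * ((n + 1)! * x ^ (n + 1) * exp (-x)) := by
          gcongr
          exact ih.trans (by gcongr)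
      _ ≤ (n + 1 + 1)! * x ^ (n + 1) * exp (-x) := by
          rw [Nat.factorial_succ (n + 1)]
          push_cast
          nlinarith [mul_le_mul_of_nonneg_left hfact (by positivity : 0 ≤ x ^ (n + 1) * exp (-x))]

theorem romanoff_Gamma_general (s : ℕ) (x : ℝ) (hx : 1 ≤ x) :
    ∫ t in Set.Ioi x, t ^ (s - 1) * Real.exp (-t) ≤
      (Nat.factorial s : ℝ) * x ^ (s - 1) * Real.exp (-x) := by
  cases s with
  | zero => simpa using integral_Ioi_pow_mul_exp_neg_le 0 hx
  | succ n => simpa using integral_Ioi_pow_mul_exp_neg_le n hx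

/-- Lemma on the incomplete Gamma function. For a positive integer
`s` and a real `x ≥ 1`, `∫_x^∞ t^(s-1) e^(-t) dt ≤ s! x^(s-1) e^(-x)`. -/
theorem romanoff_Gamma (s : ℕ) (hs : 0 < s) (x : ℝ) (hx : 1 ≤ x) :
    ∫ t in Set.Ioi x, t ^ (s - 1) * Real.exp (-t) ≤
      (Nat.factorial s : ℝ) * x ^ (s - 1) * Real.exp (-x) :=
  romanoff_Gamma_general s x hx
end

section
/- There exists an absolute constant c > 0 such that for all positive integers k and s, ∑_{p prime, p > k} (ln p)^s / p² ≤ c · s! · (ln(k+2))^{s−1} / k. -/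
/-!
Rankin's trick with parameter `1 / L`, where `L = log (k + 2)`: the bound `y ^ m / m! ≤ exp y`
gives `(log p) ^ m ≤ m! L ^ m p ^ (1 / L)`, so the sum is at most
`m! L ^ m ∑_{p > k} log p / p ^ (1 + δ)` with `m = s - 1` and `δ = 1 - 1 / L`. Partial summation
against Chebyshev's bound `θ x ≤ x log 4` compares the prime sum with
`log 4 ∑_{n > k} n ^ (-(1 + δ)) ≤ log 4 (1 + 1 / δ) k ^ (-δ)`,
and `k ^ (-δ) = k ^ (1 / L) / k ≤ e / k`. Since `L ≥ log 3 > 21 / 20`, `δ` stays bounded away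
from `0`.
-/

open Finset Real
open scoped Nat

theorem Finset.sum_range_mul_le_sum_range_mul_of_antitone {a b f : ℕ → ℝ}
    (hab : ∀ n, ∑ i ∈ range n, a i ≤ ∑ i ∈ range n, b i) (hf : Antitone f) (hf₀ : ∀ i, 0 ≤ f i)
    (N : ℕ) : ∑ i ∈ range N, a i * f i ≤ ∑ i ∈ range N, b i * f i := by
  have hparts : 0 ≤ ∑ i ∈ range N, f i • (b i - a i) := by
    rw [sum_range_by_parts]
    refine sub_nonneg.2 (le_trans (sum_nonpos fun i _ => ?_) ?_)
    · exact smul_nonpos_of_nonpos_of_nonneg (sub_nonpos.2 (hf i.le_succ))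
        (by simpa [sum_sub_distrib] using hab (i + 1))
    · exact smul_nonneg (hf₀ _) (by simpa [sum_sub_distrib] using hab N)
  simpa [smul_eq_mul, mul_sub, sum_sub_distrib, mul_comm] using hparts

theorem sum_range_log_primes_gt_le (k n : ℕ) :
    ∑ i ∈ range n, (if i.Prime ∧ k < i then log i else 0) ≤ log 4 * n := by
  have hθ : ∑ p ∈ Ioc 0 n with p.Prime, log p ≤ log 4 * n := by
    simpa [Chebyshev.theta] using Chebyshev.theta_le_log4_mul_x (Nat.cast_nonneg n)
  rw [← sum_filter]
  refine le_trans (sum_le_sum_of_subset_of_nonneg (fun i hi => ?_) fun p hp _ => ?_) hθ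
  · simp only [mem_filter, mem_range, mem_Ioc] at hi ⊢
    exact ⟨⟨hi.2.1.pos, hi.1.le⟩, hi.2.1⟩
  · exact log_natCast_nonneg p

theorem sum_range_add_succ_rpow_neg_le {x₀ δ : ℝ} (hx₀ : 0 < x₀) (hδ : 0 < δ) (n : ℕ) :
    ∑ i ∈ range n, (x₀ + (i + 1 : ℕ)) ^ (-(1 + δ)) ≤ x₀ ^ (-δ) / δ := by
  have hanti : AntitoneOn (fun x : ℝ => x ^ (-(1 + δ))) (Set.Icc x₀ (x₀ + n)) :=
    (antitoneOn_rpow_Ioi_of_exponent_nonpos (by linarith)).mono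
      fun x hx => lt_of_lt_of_le hx₀ hx.1
  have h0 : (0 : ℝ) ∉ Set.uIcc x₀ (x₀ + n) := by
    rw [Set.uIcc_of_le (by simp)]
    exact fun h => (lt_of_lt_of_le hx₀ h.1).false
  refine (hanti.sum_le_integral).trans ?_
  rw [integral_rpow (Or.inr ⟨by linarith, h0⟩), show -(1 + δ) + 1 = -δ by ring,
    div_neg, ← neg_div, neg_sub]
  gcongr
  exact sub_le_self _ (by positivity)

theorem sum_range_max_rpow_neg_le {k : ℕ} (hk : 0 < k) {δ : ℝ} (hδ : 0 < δ) (N : ℕ) :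
    ∑ i ∈ range N, max (i : ℝ) (k + 1) ^ (-(1 + δ)) ≤ (1 + 1 / δ) * (k : ℝ) ^ (-δ) := by
  have hk₀ : (0 : ℝ) < k := by exact_mod_cast hk
  have hflat : ∑ i ∈ range (k + 1), max (i : ℝ) (k + 1) ^ (-(1 + δ)) ≤ (k : ℝ) ^ (-δ) := by
    have hmax : ∀ i ∈ range (k + 1), max (i : ℝ) (k + 1) = k + 1 := fun i hi =>
      max_eq_right (by exact_mod_cast (mem_range.1 hi).le)
    rw [sum_congr rfl fun i hi => by rw [hmax i hi], sum_const, card_range, nsmul_eq_mul]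
    calc ((k + 1 : ℕ) : ℝ) * (k + 1 : ℝ) ^ (-(1 + δ)) = (k + 1 : ℝ) ^ (-δ) := by
          rw [show -δ = 1 + -(1 + δ) by ring, rpow_add (by positivity), rpow_one]
          push_cast; rfl
      _ ≤ (k : ℝ) ^ (-δ) := rpow_le_rpow_of_nonpos hk₀ (by linarith) (by linarith)
  have htail : ∑ i ∈ range N, max ((k + 1 + i : ℕ) : ℝ) (k + 1) ^ (-(1 + δ))
      ≤ (k : ℝ) ^ (-δ) / δ := by
    refine (sum_congr rfl fun i _ => ?_).trans_le (sum_range_add_succ_rpow_neg_le hk₀ hδ N)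
    rw [max_eq_left (by push_cast; linarith [(i.cast_nonneg : (0 : ℝ) ≤ i)])]
    push_cast
    ring_nf
  calc ∑ i ∈ range N, max (i : ℝ) (k + 1) ^ (-(1 + δ))
      ≤ ∑ i ∈ range (k + 1 + N), max (i : ℝ) (k + 1) ^ (-(1 + δ)) :=
        sum_le_sum_of_subset_of_nonneg (range_subset_range.2 (by omega))
          fun i _ _ => by positivity
    _ ≤ (k : ℝ) ^ (-δ) + (k : ℝ) ^ (-δ) / δ := by
        rw [sum_range_add]
        exact add_le_add hflat htail
    _ = (1 + 1 / δ) * (k : ℝ) ^ (-δ) := by ring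

theorem sum_range_primes_gt_log_mul_rpow_neg_le {k : ℕ} (hk : 0 < k) {δ : ℝ} (hδ : 0 < δ) (N : ℕ) :
    ∑ n ∈ range N, (if n.Prime ∧ k < n then log n * (n : ℝ) ^ (-(1 + δ)) else 0)
      ≤ log 4 * (1 + 1 / δ) * (k : ℝ) ^ (-δ) := by
  -- `f` agrees with `n ^ (-(1 + δ))` on the support `n > k`, and unlike it is antitone on `ℕ`.
  set f : ℕ → ℝ := fun i => max (i : ℝ) (k + 1) ^ (-(1 + δ))
  have hf : Antitone f := fun i j hij =>
    rpow_le_rpow_of_nonpos (by positivity) (max_le_max_right _ (by exact_mod_cast hij))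
      (by linarith)
  have hterm : ∀ n, (if n.Prime ∧ k < n then log n * (n : ℝ) ^ (-(1 + δ)) else 0)
      = (if n.Prime ∧ k < n then log n else 0) * f n := by
    intro n
    split_ifs with h
    · simp only [f, max_eq_left (show (k : ℝ) + 1 ≤ n by exact_mod_cast h.2)]
    · rw [zero_mul]
  have habel := sum_range_mul_le_sum_range_mul_of_antitone (b := fun _ => log 4)
    (fun n => by simpa [mul_comm] using sum_range_log_primes_gt_le k n) hf
    (fun i => by positivity) N
  rw [sum_congr rfl fun n _ => hterm n, mul_assoc]
  refine habel.trans ?_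
  rw [← mul_sum]
  exact mul_le_mul_of_nonneg_left (sum_range_max_rpow_neg_le hk hδ N)
    (log_nonneg (by norm_num))

theorem log_pow_le_factorial_mul_pow_mul_rpow {x L : ℝ} (hx : 1 ≤ x) (hL : 0 < L) (m : ℕ) :
    log x ^ m ≤ m ! * L ^ m * x ^ L⁻¹ := by
  have h := pow_div_factorial_le_exp _ (div_nonneg (log_nonneg hx) hL.le) m
  rw [div_pow, div_div, div_le_iff₀ (by positivity), div_eq_mul_inv,
    ← rpow_def_of_pos (by linarith)] at h
  linarith

theorem rpow_inv_log_le_exp_one_of_le {x y : ℝ} (hx : 0 < x) (hxy : x ≤ y) (hy : 1 < y) :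
    x ^ (log y)⁻¹ ≤ exp 1 := by
  rw [rpow_def_of_pos hx, exp_le_exp, ← div_eq_mul_inv, div_le_one (log_pos hy)]
  exact log_le_log hx hxy

theorem twenty_one_div_twenty_le_log_three : 21 / 20 ≤ log 3 := by
  rw [le_log_iff_exp_le (by norm_num), show (21 / 20 : ℝ) = 1 + 1 / 20 by norm_num, exp_add]
  have h := exp_bound_div_one_sub_of_interval (x := 1 / 20) (by norm_num) (by norm_num)
  nlinarith [exp_one_lt_d9, exp_pos 1, exp_pos (1 / 20)]

theorem sum_range_primes_gt_log_pow_div_sq_le {k s : ℕ} (hk : 0 < k) (hs : 0 < s) (N : ℕ) :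
    ∑ n ∈ range N, (if n.Prime ∧ k < n then log n ^ s / (n : ℝ) ^ 2 else 0)
      ≤ 132 * s ! * log (k + 2) ^ (s - 1) / k := by
  obtain ⟨m, rfl⟩ : ∃ m, s = m + 1 := ⟨s - 1, (Nat.succ_pred_eq_of_pos hs).symm⟩
  rw [Nat.add_sub_cancel]
  set L := log (k + 2)
  set δ := 1 - L⁻¹
  have hk₁ : (1 : ℝ) ≤ k := by exact_mod_cast hk
  have hL : 21 / 20 ≤ L :=
    twenty_one_div_twenty_le_log_three.trans (log_le_log (by norm_num) (by linarith))
  have hδ : 1 / 21 ≤ δ := by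
    have : L⁻¹ ≤ 20 / 21 := by rw [inv_le_comm₀ (by linarith) (by norm_num)]; linarith
    linarith
  have hterm : ∀ n : ℕ, (if n.Prime ∧ k < n then log n ^ (m + 1) / (n : ℝ) ^ 2 else 0)
      ≤ m ! * L ^ m * (if n.Prime ∧ k < n then log n * (n : ℝ) ^ (-(1 + δ)) else 0) := by
    intro n
    split_ifs with hn
    · have hn₁ : (1 : ℝ) ≤ n := by exact_mod_cast hn.1.one_lt.le
      have hrpow : (n : ℝ) ^ L⁻¹ / (n : ℝ) ^ 2 = (n : ℝ) ^ (-(1 + δ)) := by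
        rw [← rpow_natCast, ← rpow_sub (by linarith)]
        congr 1
        simp only [δ]; push_cast; ring
      calc log n ^ (m + 1) / (n : ℝ) ^ 2 = log n * log n ^ m / (n : ℝ) ^ 2 := by ring
        _ ≤ log n * (m ! * L ^ m * (n : ℝ) ^ L⁻¹) / (n : ℝ) ^ 2 := by
          gcongr
          exact log_pow_le_factorial_mul_pow_mul_rpow hn₁ (by linarith) m
        _ = m ! * L ^ m * (log n * (n : ℝ) ^ (-(1 + δ))) := by rw [← hrpow]; ring
    · simp
  have hkδ : (k : ℝ) ^ (-δ) ≤ 3 / k := by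
    rw [show -δ = L⁻¹ - 1 by ring, rpow_sub (by linarith), rpow_one]
    gcongr
    exact (rpow_inv_log_le_exp_one_of_le (by linarith) (by linarith) (by linarith)).trans
      (by linarith [exp_one_lt_d9])
  have hlog4 : log 4 ≤ 2 := by rw [log_four_eq]; linarith [log_two_lt_d9]
  have hδ_inv : 1 + 1 / δ ≤ 22 := by
    have := one_div_le_one_div_of_le (by norm_num) hδ
    norm_num at this ⊢; linarith
  calc ∑ n ∈ range N, (if n.Prime ∧ k < n then log n ^ (m + 1) / (n : ℝ) ^ 2 else 0)
      ≤ m ! * L ^ m * ∑ n ∈ range N,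
          (if n.Prime ∧ k < n then log n * (n : ℝ) ^ (-(1 + δ)) else 0) := by
        rw [mul_sum]; exact sum_le_sum fun n _ => hterm n
    _ ≤ m ! * L ^ m * (log 4 * (1 + 1 / δ) * (k : ℝ) ^ (-δ)) := by
        gcongr
        exact sum_range_primes_gt_log_mul_rpow_neg_le hk (by linarith) N
    _ ≤ m ! * L ^ m * (2 * 22 * (3 / k)) := by gcongr
    _ = 132 * m ! * L ^ m / k := by ring
    _ ≤ 132 * (m + 1) ! * L ^ m / k := by
        have : 0 ≤ L ^ m := pow_nonneg (by linarith) m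
        gcongr
        omega

/-- There is an absolute constant `c > 0` such that for all positive
integers `k` and `s`, the series `∑_{p > k} (ln p)^s / p²` (over primes `p`) converges
and `∑_{p > k} (ln p)^s / p² ≤ c s! (ln(k+2))^(s-1) / k`. -/
theorem romanoff_primes_tail_sum_le :
    ∃ c : ℝ, 0 < c ∧
      ∀ k s : ℕ, 0 < k → 0 < s →
        Summable (fun p : ℕ =>
          if p.Prime ∧ k < p then (Real.log p) ^ s / (p : ℝ) ^ 2 else 0) ∧
        ∑' p : ℕ, (if p.Prime ∧ k < p then (Real.log p) ^ s / (p : ℝ) ^ 2 else 0) ≤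
          c * (Nat.factorial s : ℝ) * (Real.log (k + 2)) ^ (s - 1) / (k : ℝ) := by
  refine ⟨132, by norm_num, fun k s hk hs => ?_⟩
  have hnonneg : ∀ p : ℕ,
      0 ≤ (if p.Prime ∧ k < p then Real.log p ^ s / (p : ℝ) ^ 2 else 0) := fun p => by
    split_ifs
    · exact div_nonneg (pow_nonneg (log_natCast_nonneg p) s) (by positivity)
    · exact le_rfl
  have hbound := sum_range_primes_gt_log_pow_div_sq_le hk hs
  exact ⟨summable_of_sum_range_le hnonneg hbound, Real.tsum_le_of_sum_range_le hnonneg hbound⟩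
end

section
/- There exists an absolute constant C > 0 such that for all positive integers k and s, 1 + ∑_{p prime} min(p, k) · (ln p)^s / p² ≤ C^s · s! · (ln(k+1))^s. -/
open Finset Real

/-- Chebyshev-type bound from primorial: sum of log p over primes ≤ k. -/
lemma theta_le (k : ℕ) :
    ∑ p ∈ Finset.range (k+1), (if p.Prime then Real.log p else 0) ≤ k * Real.log 4 := by
  have h1 : ∑ p ∈ Finset.range (k+1), (if p.Prime then Real.log p else 0)
      = ∑ p ∈ (Finset.range (k+1)).filter Nat.Prime, Real.log p := by
    rw [Finset.sum_filter]
  have h2 : ∑ p ∈ (Finset.range (k+1)).filter Nat.Prime, Real.log p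
      = Real.log (primorial k) := by
    rw [primorial]
    push_cast
    rw [Real.log_prod]
    intro x hx
    simp only [Finset.mem_filter] at hx
    exact_mod_cast hx.2.ne_zero
  have h3 : Real.log (primorial k) ≤ Real.log (4 ^ k) := by
    apply Real.log_le_log (by exact_mod_cast primorial_pos k)
    exact_mod_cast primorial_le_4_pow k
  rw [h1, h2]
  calc Real.log (primorial k) ≤ Real.log (4 ^ k) := h3
    _ = k * Real.log 4 := by rw [Real.log_pow]

/-- Mertens-type bound: `∑_{p ≤ k} log p / p ≤ 8 log (k+1)`. -/
lemma mertens (k : ℕ) :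
    ∑ p ∈ Finset.range (k+1), (if p.Prime then Real.log p / p else 0)
      ≤ 8 * Real.log ((k : ℝ) + 1) := by
  induction k using Nat.strong_induction_on with
  | _ k ih =>
  rcases le_or_gt k 1 with hk | hk
  · have : ∑ p ∈ Finset.range (k+1), (if p.Prime then Real.log p / p else 0) = 0 := by
      apply Finset.sum_eq_zero
      intro p hp
      simp only [Finset.mem_range] at hp
      have : ¬ p.Prime := by
        intro h
        have := h.two_le
        omega
      simp [this]
    rw [this]
    have : (0:ℝ) ≤ Real.log ((k:ℝ)+1) := Real.log_nonneg (by push_cast; linarith [Nat.cast_nonneg (α := ℝ) k])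
    linarith
  · set h := k / 2 with hh
    have hhk : h < k := by omega
    have hsplit : ∑ p ∈ Finset.range (k+1), (if p.Prime then Real.log p / p else 0)
        = ∑ p ∈ Finset.range (h+1), (if p.Prime then Real.log p / p else 0)
          + ∑ p ∈ Finset.Ico (h+1) (k+1), (if p.Prime then Real.log p / p else 0) := by
      simp only [Finset.range_eq_Ico]
      exact (Finset.sum_Ico_consecutive _ (Nat.zero_le (h+1)) (by omega : h+1 ≤ k+1)).symm
    have hblock : ∑ p ∈ Finset.Ico (h+1) (k+1), (if p.Prime then Real.log p / p else 0)
        ≤ 2 * Real.log 4 := by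
      have step1 : ∑ p ∈ Finset.Ico (h+1) (k+1), (if p.Prime then Real.log p / p else 0)
          ≤ ∑ p ∈ Finset.Ico (h+1) (k+1),
              (if p.Prime then Real.log p else 0) / ((h : ℝ) + 1) := by
        apply Finset.sum_le_sum
        intro p hp
        simp only [Finset.mem_Ico] at hp
        by_cases hpp : p.Prime
        · simp only [hpp, if_true]
          apply div_le_div_of_nonneg_left (Real.log_nonneg (by exact_mod_cast hpp.one_lt.le))
            (by positivity)
          exact_mod_cast hp.1
        · simp [hpp]
      have step2 : ∑ p ∈ Finset.Ico (h+1) (k+1), (if p.Prime then Real.log p else 0)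
          ≤ k * Real.log 4 := by
        refine le_trans ?_ (theta_le k)
        apply Finset.sum_le_sum_of_subset_of_nonneg
        · intro p hp
          simp only [Finset.mem_Ico] at hp
          simp only [Finset.mem_range]
          omega
        · intro p _ _
          by_cases hpp : p.Prime
          · simp only [hpp, if_true]
            exact Real.log_nonneg (by exact_mod_cast hpp.one_lt.le)
          · simp [hpp]
      calc ∑ p ∈ Finset.Ico (h+1) (k+1), (if p.Prime then Real.log p / p else 0)
          ≤ ∑ p ∈ Finset.Ico (h+1) (k+1),
              (if p.Prime then Real.log p else 0) / ((h : ℝ) + 1) := step1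
        _ = (∑ p ∈ Finset.Ico (h+1) (k+1), (if p.Prime then Real.log p else 0)) / ((h:ℝ)+1) := by
            rw [Finset.sum_div]
        _ ≤ (k * Real.log 4) / ((h:ℝ)+1) := by
            apply div_le_div_of_nonneg_right step2 (by positivity) |>.trans_eq rfl
        _ ≤ 2 * Real.log 4 := by
            rw [div_le_iff₀ (by positivity : (0:ℝ) < (h:ℝ)+1)]
            have h4 : (0:ℝ) ≤ Real.log 4 := Real.log_nonneg (by norm_num)
            have hk2 : (k : ℝ) ≤ 2 * ((h:ℝ)+1) := by
              have : k ≤ 2 * (h + 1) := by omega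
              exact_mod_cast this
            nlinarith
    have hIH := ih h hhk
    have hlast : 8 * Real.log ((h:ℝ)+1) + 2 * Real.log 4 ≤ 8 * Real.log ((k:ℝ)+1) := by
      have key : Real.log ((h:ℝ)+1) + Real.log (3/2) ≤ Real.log ((k:ℝ)+1) := by
        rw [← Real.log_mul (by positivity) (by norm_num)]
        apply Real.log_le_log (by positivity)
        have : 3 * (h + 1) ≤ 2 * (k + 1) := by omega
        have : (3 : ℝ) * ((h:ℝ)+1) ≤ 2 * ((k:ℝ)+1) := by exact_mod_cast this
        linarith
      have num : 2 * Real.log 4 ≤ 8 * Real.log (3/2) := by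
        have h1 : 2 * Real.log 4 = Real.log (4^2) := by rw [Real.log_pow]; norm_num
        have h2 : 8 * Real.log (3/2) = Real.log ((3/2)^8) := by rw [Real.log_pow]; norm_num
        rw [h1, h2]
        apply Real.log_le_log (by norm_num)
        norm_num
      linarith
    linarith [hsplit, hblock, hIH, hlast]

/-- Telescoping bound for sums of nonneg functions supported on `m > k`. -/
lemma tele_sum {k : ℕ} (f g : ℕ → ℝ) (hg : ∀ m, 0 ≤ g m)
    (hf0 : ∀ m, ¬ k < m → f m = 0)
    (h : ∀ m, k < m → f m ≤ g (m-1) - g m) :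
    ∀ N, ∑ m ∈ Finset.range N, f m ≤ g k := by
  have key : ∀ N, ∑ m ∈ Finset.range N, f m ≤ g k - g (max (N-1) k) := by
    intro N
    induction N with
    | zero => simp
    | succ N ihN =>
      rw [Finset.sum_range_succ]
      rcases le_or_gt N k with hN | hN
      · have hfN : f N = 0 := hf0 N (by omega)
        have : max (N + 1 - 1) k = k := by omega
        rw [this, hfN]
        have : max (N-1) k = k := by omega
        rw [this] at ihN
        linarith
      · have hfN := h N hN
        have h1 : max (N-1) k = N - 1 := by omega
        have h2 : max (N+1-1) k = N := by omega
        rw [h1] at ihN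
        rw [h2]
        linarith
  intro N
  have := key N
  have := hg (max (N-1) k)
  linarith

lemma tele_sq {k : ℕ} (hk : 0 < k) (N : ℕ) :
    ∑ m ∈ Finset.range N, (if k < m then (k : ℝ) / (m:ℝ)^2 else 0) ≤ 1 := by
  have := tele_sum (k := k) (fun m => if k < m then (k : ℝ) / (m:ℝ)^2 else 0)
    (fun m => (k : ℝ) / (m:ℝ)) (by intro m; positivity)
    (by intro m hm; simp [hm]) ?_ N
  · calc _ ≤ (k:ℝ)/(k:ℝ) := this
      _ = 1 := div_self (by positivity)
  · intro m hm
    simp only [hm, if_true]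
    have hm1 : (1:ℝ) ≤ (m:ℝ) - 1 := by
      have : 2 ≤ m := by omega
      have : (2:ℝ) ≤ (m:ℝ) := by exact_mod_cast this
      linarith
    have hcast : ((m-1 : ℕ) : ℝ) = (m:ℝ) - 1 := by
      have : 1 ≤ m := by omega
      push_cast [this]
      ring
    rw [hcast]
    have h1 : (0:ℝ) < (m:ℝ) - 1 := by linarith
    have h2 : (0:ℝ) < (m:ℝ) := by linarith
    rw [div_sub_div _ _ (ne_of_gt h1) (ne_of_gt h2),
      div_le_div_iff₀ (by positivity) (mul_pos h1 h2)]
    have hk0 : (0:ℝ) ≤ (k:ℝ) := by positivity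
    nlinarith

lemma tele_sqrt {k : ℕ} (hk : 0 < k) (N : ℕ) :
    ∑ m ∈ Finset.range N, (if k < m then ((m:ℝ) * Real.sqrt m)⁻¹ else 0)
      ≤ 2 / Real.sqrt k := by
  have := tele_sum (k := k) (fun m => if k < m then ((m:ℝ) * Real.sqrt m)⁻¹ else 0)
    (fun m => 2 / Real.sqrt m) (by intro m; positivity)
    (by intro m hm; simp [hm]) ?_ N
  · exact this
  · intro m hm
    simp only [hm, if_true]
    have hm2 : 2 ≤ m := by omega
    have hm1R : (1:ℝ) ≤ (m:ℝ) - 1 := by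
      have : (2:ℝ) ≤ (m:ℝ) := by exact_mod_cast hm2
      linarith
    have hcast : ((m-1 : ℕ) : ℝ) = (m:ℝ) - 1 := by
      have : 1 ≤ m := by omega
      push_cast [this]
      ring
    rw [hcast]
    set a := Real.sqrt ((m:ℝ) - 1) with ha
    set b := Real.sqrt (m:ℝ) with hb
    have ha0 : 0 < a := Real.sqrt_pos.mpr (by linarith)
    have hb0 : 0 < b := Real.sqrt_pos.mpr (by linarith)
    have hab : a ≤ b := Real.sqrt_le_sqrt (by linarith)
    have haa : a * a = (m:ℝ) - 1 := Real.mul_self_sqrt (by linarith)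
    have hbb : b * b = (m:ℝ) := Real.mul_self_sqrt (by linarith)
    have hdiff : (b - a) * (b + a) = 1 := by nlinarith
    rw [div_sub_div _ _ (ne_of_gt ha0) (ne_of_gt hb0), inv_eq_one_div,
      div_le_div_iff₀ (by positivity) (by positivity)]
    -- goal: 1 * (a * b) ≤ (2*b - 2*a) * (m * b)
    have h1 : b + a ≤ 2 * b := by linarith
    have h2 : (b - a) * (2 * b) ≥ 1 := by nlinarith
    nlinarith [mul_pos ha0 hb0, mul_pos hb0 hb0]

/-- `(log x)^s ≤ (2s)^s √x` for `x ≥ 1`, `s ≥ 1`. -/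
lemma log_pow_le_sqrt {s : ℕ} (hs : 0 < s) {x : ℝ} (hx : 1 ≤ x) :
    (Real.log x) ^ s ≤ (2 * (s:ℝ)) ^ s * Real.sqrt x := by
  have hx0 : (0:ℝ) < x := by linarith
  set τ : ℝ := (2 * (s:ℝ))⁻¹ with hτ
  have hs0 : (0:ℝ) < 2 * (s:ℝ) := by positivity
  have hlog : Real.log x ≤ 2 * (s:ℝ) * x ^ τ := by
    have h1 : Real.log (x ^ τ) = τ * Real.log x := Real.log_rpow hx0 τ
    have h2 : Real.log (x ^ τ) ≤ x ^ τ := Real.log_le_self (Real.rpow_nonneg hx0.le τ)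
    have h3 : Real.log x = 2 * (s:ℝ) * Real.log (x ^ τ) := by
      rw [h1, hτ]
      field_simp
    rw [h3]
    have := mul_le_mul_of_nonneg_left h2 hs0.le
    linarith
  have hln : 0 ≤ Real.log x := Real.log_nonneg hx
  calc (Real.log x) ^ s ≤ (2 * (s:ℝ) * x ^ τ) ^ s := pow_le_pow_left₀ hln hlog s
    _ = (2 * (s:ℝ)) ^ s * (x ^ τ) ^ s := by rw [mul_pow]
    _ = (2 * (s:ℝ)) ^ s * Real.sqrt x := by
        congr 1
        rw [← Real.rpow_natCast (x ^ τ) s, ← Real.rpow_mul hx0.le]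
        have : τ * (s:ℝ) = 1/2 := by
          rw [hτ]
          have : (s:ℝ) ≠ 0 := by positivity
          field_simp
        rw [this, ← Real.sqrt_eq_rpow]

lemma add_pow_le_two_pow {a b : ℝ} (ha : 0 ≤ a) (hb : 0 ≤ b) (s : ℕ) :
    (a + b) ^ s ≤ 2 ^ s * (a ^ s + b ^ s) := by
  have h1 : a + b ≤ 2 * max a b := by
    rcases max_cases a b with ⟨h, h'⟩ | ⟨h, h'⟩ <;> rw [h] <;> linarith
  calc (a + b) ^ s ≤ (2 * max a b) ^ s :=
        pow_le_pow_left₀ (by positivity) h1 s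
    _ = 2 ^ s * (max a b) ^ s := by rw [mul_pow]
    _ ≤ 2 ^ s * (a ^ s + b ^ s) := by
        apply mul_le_mul_of_nonneg_left _ (by positivity)
        rcases max_cases a b with ⟨h, _⟩ | ⟨h, _⟩ <;> rw [h] <;> nlinarith [pow_nonneg ha s, pow_nonneg hb s]

lemma pow_self_le (s : ℕ) : (s:ℝ) ^ s ≤ Real.exp 1 ^ s * (s.factorial : ℝ) := by
  have h := Real.pow_div_factorial_le_exp (x := (s:ℝ)) (by positivity) s
  rw [div_le_iff₀ (by positivity : (0:ℝ) < (s.factorial:ℝ))] at h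
  rw [Real.exp_one_pow]
  linarith

lemma tail_term {k s m : ℕ} (hk : 0 < k) (hs : 0 < s) (hm : k < m) :
    (k:ℝ) * (Real.log m)^s / (m:ℝ)^2
      ≤ 2^s * (Real.log ((k:ℝ)+1))^s * ((k:ℝ)/(m:ℝ)^2)
        + 2^s * (2*(s:ℝ))^s * Real.sqrt k * ((m:ℝ) * Real.sqrt m)⁻¹ := by
  have hK1' : (1:ℝ) ≤ (k:ℝ) := by exact_mod_cast hk
  have hM1' : (k:ℝ) + 1 ≤ (m:ℝ) := by
    have : k + 1 ≤ m := hm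
    exact_mod_cast this
  set K := (k:ℝ) with hK
  set M := (m:ℝ) with hM
  have hK1 : (1:ℝ) ≤ K := hK1'
  have hM1 : K + 1 ≤ M := hM1'
  have hM0 : (0:ℝ) < M := by linarith
  have hK10 : (0:ℝ) < K + 1 := by linarith
  set a := Real.log (K+1) with ha'
  set b := Real.log (M/(K+1)) with hb'
  have ha : 0 ≤ a := Real.log_nonneg (by linarith)
  have hb : 0 ≤ b := Real.log_nonneg ((le_div_iff₀ hK10).mpr (by linarith))
  have hab : Real.log M = a + b := by
    rw [hb', Real.log_div (ne_of_gt hM0) (ne_of_gt hK10)]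
    ring
  have hpow : (Real.log M)^s ≤ 2^s * (a^s + b^s) := by
    rw [hab]; exact add_pow_le_two_pow ha hb s
  have hbs : b^s ≤ (2*(s:ℝ))^s * (Real.sqrt M / Real.sqrt (K+1)) := by
    have h1 : (1:ℝ) ≤ M/(K+1) := (le_div_iff₀ hK10).mpr (by linarith)
    have := log_pow_le_sqrt hs h1
    rwa [Real.sqrt_div hM0.le] at this
  have hKM : 0 ≤ K / M^2 := by positivity
  have hstep : K * (Real.log M)^s / M^2 ≤ 2^s*a^s*(K/M^2) + 2^s*(K/M^2)*b^s := by
    have h2 : K * (Real.log M)^s / M^2 = (K/M^2) * (Real.log M)^s := by ring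
    rw [h2]
    calc (K/M^2) * (Real.log M)^s ≤ (K/M^2) * (2^s * (a^s + b^s)) :=
          mul_le_mul_of_nonneg_left hpow hKM
      _ = 2^s*a^s*(K/M^2) + 2^s*(K/M^2)*b^s := by ring
  have hsK : K / Real.sqrt (K+1) ≤ Real.sqrt K := by
    rw [div_le_iff₀ (Real.sqrt_pos.mpr hK10)]
    have h1 : Real.sqrt K * Real.sqrt K = K := Real.mul_self_sqrt (by linarith)
    have h2 : Real.sqrt K ≤ Real.sqrt (K+1) := Real.sqrt_le_sqrt (by linarith)
    nlinarith [Real.sqrt_nonneg K]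
  have hsM : Real.sqrt M / M^2 = (M * Real.sqrt M)⁻¹ := by
    rw [inv_eq_one_div, div_eq_div_iff (by positivity) (by positivity)]
    have := Real.mul_self_sqrt hM0.le
    nlinarith
  have hlast : 2^s*(K/M^2)*b^s ≤ 2^s * (2*(s:ℝ))^s * Real.sqrt K * ((M) * Real.sqrt M)⁻¹ := by
    have step1 : 2^s*(K/M^2)*b^s ≤ 2^s*(K/M^2)*((2*(s:ℝ))^s * (Real.sqrt M / Real.sqrt (K+1))) :=
      mul_le_mul_of_nonneg_left hbs (by positivity)
    have heq : 2^s*(K/M^2)*((2*(s:ℝ))^s * (Real.sqrt M / Real.sqrt (K+1)))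
        = 2^s * (2*(s:ℝ))^s * ((K / Real.sqrt (K+1)) * (Real.sqrt M / M^2)) := by ring
    have step2 : (K / Real.sqrt (K+1)) * (Real.sqrt M / M^2)
        ≤ Real.sqrt K * ((M) * Real.sqrt M)⁻¹ := by
      rw [hsM]
      exact mul_le_mul_of_nonneg_right hsK (by positivity)
    calc 2^s*(K/M^2)*b^s ≤ 2^s*(K/M^2)*((2*(s:ℝ))^s * (Real.sqrt M / Real.sqrt (K+1))) := step1
      _ = 2^s * (2*(s:ℝ))^s * ((K / Real.sqrt (K+1)) * (Real.sqrt M / M^2)) := heq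
      _ ≤ 2^s * (2*(s:ℝ))^s * (Real.sqrt K * ((M) * Real.sqrt M)⁻¹) :=
          mul_le_mul_of_nonneg_left step2 (by positivity)
      _ = 2^s * (2*(s:ℝ))^s * Real.sqrt K * ((M) * Real.sqrt M)⁻¹ := by ring
  calc K * (Real.log M)^s / M^2 ≤ 2^s*a^s*(K/M^2) + 2^s*(K/M^2)*b^s := hstep
    _ ≤ 2^s*a^s*(K/M^2) + 2^s * (2*(s:ℝ))^s * Real.sqrt K * ((M) * Real.sqrt M)⁻¹ := by
        linarith
    _ = 2^s * (Real.log (K+1))^s * (K/M^2)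
        + 2^s * (2*(s:ℝ))^s * Real.sqrt K * ((M) * Real.sqrt M)⁻¹ := by rw [ha']
set_option maxHeartbeats 1000000 in
/-- There is an absolute constant `C > 0` such that for all positive
integers `k` and `s`, the series `∑_p min(p,k) (ln p)^s / p²` (over primes `p`) converges
and `1 + ∑_p min(p,k) (ln p)^s / p² ≤ C^s s! (ln(k+1))^s`. -/
theorem romanoff_primes_min_sum_le :
    ∃ C : ℝ, 0 < C ∧
      ∀ k s : ℕ, 0 < k → 0 < s →
        Summable (fun p : ℕ =>
          if p.Prime then (min p k : ℝ) * (Real.log p) ^ s / (p : ℝ) ^ 2 else 0) ∧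
        1 + ∑' p : ℕ,
            (if p.Prime then (min p k : ℝ) * (Real.log p) ^ s / (p : ℝ) ^ 2 else 0) ≤
          C ^ s * (Nat.factorial s : ℝ) * (Real.log (k + 1)) ^ s := by
  refine ⟨200, by norm_num, fun k s hk hs => ?_⟩
  set L := Real.log ((k:ℝ) + 1) with hL
  set F : ℕ → ℝ := fun p : ℕ =>
    if p.Prime then (min p k : ℝ) * (Real.log p) ^ s / (p : ℝ) ^ 2 else 0 with hF
  have hF0 : ∀ p, 0 ≤ F p := by
    intro p
    rw [hF]
    by_cases hp : p.Prime
    · simp only [hp, if_true]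
      have h1 : (1:ℝ) ≤ (p:ℝ) := by exact_mod_cast hp.one_lt.le
      have := Real.log_nonneg h1
      positivity
    · simp [hp]
  have hL0 : 0 ≤ L := Real.log_nonneg (le_add_of_nonneg_left (Nat.cast_nonneg k))
  -- head and tail comparison functions
  set Fh : ℕ → ℝ := fun p =>
    if p.Prime ∧ p ≤ k then (Real.log p) ^ s / (p:ℝ) else 0 with hFh
  set Ft : ℕ → ℝ := fun p =>
    if k < p then 2^s * L^s * ((k:ℝ)/(p:ℝ)^2)
      + 2^s * (2*(s:ℝ))^s * Real.sqrt k * ((p:ℝ) * Real.sqrt p)⁻¹ else 0 with hFt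
  have hFh0 : ∀ p, 0 ≤ Fh p := by
    intro p
    rw [hFh]
    by_cases hp : p.Prime ∧ p ≤ k
    · simp only [hp, if_true]
      have h1 : (1:ℝ) ≤ (p:ℝ) := by exact_mod_cast hp.1.one_lt.le
      have := Real.log_nonneg h1
      positivity
    · simp [hp]
  have hFt0 : ∀ p, 0 ≤ Ft p := by
    intro p
    rw [hFt]
    by_cases hp : k < p
    · simp only [hp, if_true]
      positivity
    · simp [hp]
  -- pointwise bound
  have hpt : ∀ p, F p ≤ Fh p + Ft p := by
    intro p
    by_cases hp : p.Prime
    · rcases le_or_gt p k with hpk | hpk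
      · have hmin : min (p:ℝ) (k:ℝ) = (p:ℝ) := min_eq_left (by exact_mod_cast hpk)
        have hp0 : (0:ℝ) < (p:ℝ) := by exact_mod_cast hp.pos
        have hFp : F p = (Real.log p) ^ s / (p:ℝ) := by
          rw [hF]
          simp only [hp, if_true]
          rw [hmin, pow_two, mul_div_mul_left _ _ (ne_of_gt hp0)]
        have hFhp : Fh p = (Real.log p) ^ s / (p:ℝ) := by
          rw [hFh]; simp [hp, hpk]
        rw [hFp, hFhp]
        have := hFt0 p
        linarith
      · have hmin : min (p:ℝ) (k:ℝ) = (k:ℝ) := min_eq_right (by exact_mod_cast hpk.le)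
        have hFp : F p = (k:ℝ) * (Real.log p) ^ s / (p:ℝ)^2 := by
          rw [hF]; simp only [hp, if_true]; rw [hmin]
        have hFtp : Ft p = 2^s * L^s * ((k:ℝ)/(p:ℝ)^2)
            + 2^s * (2*(s:ℝ))^s * Real.sqrt k * ((p:ℝ) * Real.sqrt p)⁻¹ := by
          rw [hFt]; simp [hpk]
        have := tail_term hk hs hpk
        rw [hFp, hFtp]
        have := hFh0 p
        rw [hL]
        linarith
    · have : F p = 0 := by rw [hF]; simp [hp]
      rw [this]
      have := hFh0 p
      have := hFt0 p
      linarith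
  -- bound on head partial sums
  have hhead : ∀ N, ∑ p ∈ Finset.range N, Fh p ≤ 8 * L^s := by
    intro N
    have h1 : ∑ p ∈ Finset.range N, Fh p ≤ ∑ p ∈ Finset.range (N + (k+1)), Fh p :=
      Finset.sum_le_sum_of_subset_of_nonneg
        (Finset.range_subset_range.mpr (by omega)) (fun p _ _ => hFh0 p)
    have h2 : ∑ p ∈ Finset.range (k+1), Fh p = ∑ p ∈ Finset.range (N + (k+1)), Fh p := by
      apply Finset.sum_subset (Finset.range_subset_range.mpr (by omega))
      intro x _ hx
      simp only [Finset.mem_range] at hx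
      rw [hFh]
      have : ¬ (x.Prime ∧ x ≤ k) := by
        rintro ⟨_, h⟩; omega
      simp [this]
    have h3 : ∑ p ∈ Finset.range (k+1), Fh p
        ≤ ∑ p ∈ Finset.range (k+1), L^(s-1) * (if p.Prime then Real.log p / p else 0) := by
      apply Finset.sum_le_sum
      intro p _
      rw [hFh]
      by_cases hp : p.Prime ∧ p ≤ k
      · simp only [hp, if_true, hp.1, if_true]
        have hp1 : (1:ℝ) ≤ (p:ℝ) := by exact_mod_cast hp.1.one_lt.le
        have hlogp : 0 ≤ Real.log p := Real.log_nonneg hp1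
        have hplogL : Real.log p ≤ L := by
          rw [hL]
          apply Real.log_le_log (by linarith)
          have : (p:ℝ) ≤ (k:ℝ) := by exact_mod_cast hp.2
          linarith
        have hs1 : s - 1 + 1 = s := by omega
        have hexp : (Real.log p) ^ s = (Real.log p)^(s-1) * Real.log p := by
          conv_lhs => rw [← hs1]
          rw [pow_succ]
        rw [hexp]
        have hple : (Real.log p)^(s-1) ≤ L^(s-1) := pow_le_pow_left₀ hlogp hplogL _
        have hdiv : 0 ≤ Real.log p / (p:ℝ) := by positivity
        calc (Real.log p)^(s-1) * Real.log p / (p:ℝ)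
            = (Real.log p)^(s-1) * (Real.log p / (p:ℝ)) := by ring
          _ ≤ L^(s-1) * (Real.log p / (p:ℝ)) := mul_le_mul_of_nonneg_right hple hdiv
      · simp only [hp, if_false]
        by_cases hpp : p.Prime
        · simp only [hpp, if_true]
          have hp1 : (1:ℝ) ≤ (p:ℝ) := by exact_mod_cast hpp.one_lt.le
          have := Real.log_nonneg hp1
          positivity
        · simp [hpp]
    have h4 : ∑ p ∈ Finset.range (k+1), L^(s-1) * (if p.Prime then Real.log p / p else 0)
        ≤ L^(s-1) * (8 * Real.log ((k:ℝ)+1)) := by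
      rw [← Finset.mul_sum]
      exact mul_le_mul_of_nonneg_left (mertens k) (by positivity)
    have h5 : L^(s-1) * (8 * Real.log ((k:ℝ)+1)) = 8 * L^s := by
      rw [← hL]
      have hs1 : s - 1 + 1 = s := by omega
      conv_rhs => rw [← hs1]
      rw [pow_succ]
      ring
    linarith
  -- bound on tail partial sums
  have htail : ∀ N, ∑ p ∈ Finset.range N, Ft p ≤ 2^s * L^s + 2 * (2^s * (2*(s:ℝ))^s) := by
    intro N
    have hsplit : ∀ p, Ft p = 2^s * L^s * (if k < p then (k:ℝ)/(p:ℝ)^2 else 0)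
        + 2^s * (2*(s:ℝ))^s * Real.sqrt k *
          (if k < p then ((p:ℝ) * Real.sqrt p)⁻¹ else 0) := by
      intro p
      rw [hFt]
      by_cases hp : k < p
      · simp [hp]
      · simp [hp]
    have h1 : ∑ p ∈ Finset.range N, Ft p
        = 2^s * L^s * (∑ p ∈ Finset.range N, (if k < p then (k:ℝ)/(p:ℝ)^2 else 0))
          + 2^s * (2*(s:ℝ))^s * Real.sqrt k *
            (∑ p ∈ Finset.range N, (if k < p then ((p:ℝ) * Real.sqrt p)⁻¹ else 0)) := by
      rw [Finset.mul_sum, Finset.mul_sum, ← Finset.sum_add_distrib]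
      exact Finset.sum_congr rfl (fun p _ => hsplit p)
    rw [h1]
    have h2 := tele_sq hk N
    have h3 := tele_sqrt hk N
    have hsqk : 0 < Real.sqrt k := Real.sqrt_pos.mpr (by exact_mod_cast hk)
    have c1 : (0:ℝ) ≤ 2^s * L^s := by positivity
    have c2 : (0:ℝ) ≤ 2^s * (2*(s:ℝ))^s * Real.sqrt k := by positivity
    have t1 : 2^s * L^s * (∑ p ∈ Finset.range N, (if k < p then (k:ℝ)/(p:ℝ)^2 else 0))
        ≤ 2^s * L^s * 1 := mul_le_mul_of_nonneg_left h2 c1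
    have t2 : 2^s * (2*(s:ℝ))^s * Real.sqrt k *
          (∑ p ∈ Finset.range N, (if k < p then ((p:ℝ) * Real.sqrt p)⁻¹ else 0))
        ≤ 2^s * (2*(s:ℝ))^s * Real.sqrt k * (2 / Real.sqrt k) :=
      mul_le_mul_of_nonneg_left h3 c2
    have t3 : 2^s * (2*(s:ℝ))^s * Real.sqrt k * (2 / Real.sqrt k)
        = 2 * (2^s * (2*(s:ℝ))^s) := by
      field_simp
    rw [t3] at t2
    linarith
  -- total bound on partial sums
  set B : ℝ := 8 * L^s + (2^s * L^s + 2 * (2^s * (2*(s:ℝ))^s)) with hB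
  have hbound : ∀ N, ∑ p ∈ Finset.range N, F p ≤ B := by
    intro N
    calc ∑ p ∈ Finset.range N, F p ≤ ∑ p ∈ Finset.range N, (Fh p + Ft p) :=
          Finset.sum_le_sum (fun p _ => hpt p)
      _ = ∑ p ∈ Finset.range N, Fh p + ∑ p ∈ Finset.range N, Ft p :=
          Finset.sum_add_distrib
      _ ≤ B := by
          rw [hB]
          have := hhead N
          have := htail N
          linarith
  have hsummable : Summable F := summable_of_sum_range_le hF0 hbound
  refine ⟨hsummable, ?_⟩
  have htsum : ∑' p, F p ≤ B := Real.tsum_le_of_sum_range_le hF0 hbound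
  -- final numeric assembly
  have hlog2 : (0.6931471803 : ℝ) < Real.log 2 := Real.log_two_gt_d9
  have hL2 : Real.log 2 ≤ L := by
    rw [hL]
    apply Real.log_le_log (by norm_num)
    have : (1:ℝ) ≤ (k:ℝ) := by exact_mod_cast hk
    linarith
  have hLpos : (0:ℝ) < L := by linarith
  have hfac1 : (1:ℝ) ≤ (s.factorial : ℝ) := by exact_mod_cast s.factorial_pos
  have hfac0 : (0:ℝ) ≤ (s.factorial : ℝ) := by linarith
  have hsne : s ≠ 0 := by omega
  -- piece 0 : 1 ≤ 50^s * s! * L^s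
  have hp0 : (1:ℝ) ≤ 50^s * (s.factorial:ℝ) * L^s := by
    have h2L : (1:ℝ) ≤ 50 * L := by nlinarith
    have := pow_le_pow_left₀ (zero_le_one) h2L s
    rw [one_pow, mul_pow] at this
    nlinarith [pow_nonneg (by positivity : (0:ℝ) ≤ 50*L) s,
      pow_nonneg hL0 s, pow_nonneg (by norm_num : (0:ℝ) ≤ 50) s]
  -- piece 1 : 8 * L^s ≤ 50^s * s! * L^s
  have hLs : (0:ℝ) ≤ L^s := pow_nonneg hL0 s
  have h50s : (0:ℝ) ≤ 50^s := pow_nonneg (by norm_num) s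
  have hp1 : 8 * L^s ≤ 50^s * (s.factorial:ℝ) * L^s := by
    have h8 : (8:ℝ) ≤ 50^s := le_trans (by norm_num) (le_self_pow₀ (by norm_num) hsne)
    have h8' : (8:ℝ) ≤ 50^s * (s.factorial:ℝ) := by nlinarith
    exact mul_le_mul_of_nonneg_right h8' hLs
  -- piece 2 : 2^s * L^s ≤ 50^s * s! * L^s
  have hp2 : 2^s * L^s ≤ 50^s * (s.factorial:ℝ) * L^s := by
    have h2 : (2:ℝ)^s ≤ 50^s := pow_le_pow_left₀ (by norm_num) (by norm_num) s
    have h2' : (2:ℝ)^s ≤ 50^s * (s.factorial:ℝ) := by nlinarith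
    exact mul_le_mul_of_nonneg_right h2' hLs
  -- piece 3 : 2 * (2^s * (2s)^s) ≤ 50^s * s! * L^s
  have hp3 : 2 * (2^s * (2*(s:ℝ))^s) ≤ 50^s * (s.factorial:ℝ) * L^s := by
    have he : Real.exp 1 < 2.7182818286 := Real.exp_one_lt_d9
    have he0 : (0:ℝ) < Real.exp 1 := Real.exp_pos 1
    have hss : (2*(s:ℝ))^s ≤ 2^s * (Real.exp 1 ^ s * (s.factorial:ℝ)) := by
      rw [mul_pow]
      exact mul_le_mul_of_nonneg_left (pow_self_le s) (by positivity)
    have h2s : (2:ℝ) ≤ 2^s := le_self_pow₀ (by norm_num) hsne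
    have step : 2 * (2^s * (2*(s:ℝ))^s) ≤ 2^s * 2^s * 2^s * Real.exp 1 ^ s * (s.factorial:ℝ) := by
      have e1 : 2 * (2^s * (2*(s:ℝ))^s) ≤ 2^s * (2^s * (2*(s:ℝ))^s) := by
        have : (0:ℝ) ≤ 2^s * (2*(s:ℝ))^s := by positivity
        nlinarith
      have e2 : 2^s * (2^s * (2*(s:ℝ))^s) ≤ 2^s * (2^s * (2^s * (Real.exp 1 ^ s * (s.factorial:ℝ)))) := by
        apply mul_le_mul_of_nonneg_left _ (by positivity)
        exact mul_le_mul_of_nonneg_left hss (by positivity)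
      calc 2 * (2^s * (2*(s:ℝ))^s) ≤ 2^s * (2^s * (2*(s:ℝ))^s) := e1
        _ ≤ 2^s * (2^s * (2^s * (Real.exp 1 ^ s * (s.factorial:ℝ)))) := e2
        _ = 2^s * 2^s * 2^s * Real.exp 1 ^ s * (s.factorial:ℝ) := by ring
    have hfin : 2^s * 2^s * 2^s * Real.exp 1 ^ s * (s.factorial:ℝ)
        ≤ 50^s * (s.factorial:ℝ) * L^s := by
      have key : (2:ℝ)^s * 2^s * 2^s * Real.exp 1 ^ s = (8 * Real.exp 1)^s := by
        rw [show (8 : ℝ) = 2*2*2 by norm_num]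
        rw [mul_pow, mul_pow, mul_pow]
      rw [key]
      have hcmp : 8 * Real.exp 1 ≤ 50 * L := by nlinarith
      have hpow : (8 * Real.exp 1)^s ≤ (50 * L)^s :=
        pow_le_pow_left₀ (by positivity) hcmp s
      have hpow2 : (8 * Real.exp 1)^s ≤ 50^s * L^s := hpow.trans (le_of_eq (mul_pow 50 L s))
      calc (8 * Real.exp 1)^s * (s.factorial:ℝ)
          ≤ 50^s * L^s * (s.factorial:ℝ) := mul_le_mul_of_nonneg_right hpow2 hfac0
        _ = 50^s * (s.factorial:ℝ) * L^s := by ring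
    linarith
  -- combine
  have hcomb : 1 + B ≤ 4 * (50^s * (s.factorial:ℝ) * L^s) := by
    rw [hB]
    linarith
  have h4s : (4:ℝ) ≤ 4^s := le_self_pow₀ (by norm_num) hsne
  have h200 : (200:ℝ)^s = 4^s * 50^s := by
    rw [← mul_pow]; norm_num
  have hfinal : 4 * (50^s * (s.factorial:ℝ) * L^s) ≤ 200^s * (s.factorial:ℝ) * L^s := by
    rw [h200]
    have hnn : (0:ℝ) ≤ 50^s * (s.factorial:ℝ) * L^s := by positivity
    calc 4 * (50^s * (s.factorial:ℝ) * L^s) ≤ 4^s * (50^s * (s.factorial:ℝ) * L^s) :=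
          mul_le_mul_of_nonneg_right h4s hnn
      _ = 4^s * 50^s * (s.factorial:ℝ) * L^s := by ring
  calc 1 + ∑' p, F p ≤ 1 + B := by linarith
    _ ≤ 4 * (50^s * (s.factorial:ℝ) * L^s) := hcomb
    _ ≤ 200^s * (s.factorial:ℝ) * L^s := hfinal
end

section
/- Let a and b be integers with a ≥ 2 and b ≥ 2. For a prime p not dividing a, let h_a(p) denote the multiplicative order of a modulo p, i.e. the least positive integer h with a^h ≡ 1 (mod p). Then there exists a constant c(a,b) > 0, depending only on a and b, such that ∑_{p prime, p ∤ a} (ln p) / ( p · (h_a(p))^{1/b} ) ≤ c(a,b); in particular this series converges. -/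
/-!
Group the primes by their order `h = h_a(p)`. Such a prime satisfies `h ∣ p - 1` and
`p ∣ a ^ h - 1`. The ones with `p ≤ h ^ 2` are of the form `p = (k + 1) h + 1` with `k < h`,
so a harmonic sum bounds their `∑ log p / p` by `2 log h (1 + log h) / h`. The ones with
`p > h ^ 2` have `∑ log p ≤ log (a ^ h - 1) ≤ h log a`, so they contribute at most `log a / h`.
Dividing by `h ^ (1 / b)`, the primes of order `h` contribute `O(log² h / h ^ (1 + 1 / b))`,
which is summable in `h`.
-/

open Finset Real
open scoped ArithmeticFunction.vonMangoldt

theorem dvd_pow_orderOf_natCast_sub_one (n a : ℕ) : n ∣ a ^ orderOf (a : ZMod n) - 1 := by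
  rcases Nat.eq_zero_or_pos (a ^ orderOf (a : ZMod n)) with h0 | hpos
  · simp [h0]
  · rw [← ZMod.natCast_eq_zero_iff, Nat.cast_sub hpos, Nat.cast_pow, pow_orderOf_eq_one,
      Nat.cast_one, sub_self]

theorem orderOf_natCast_dvd_sub_one {p a : ℕ} (hp : p.Prime) (hpa : ¬p ∣ a) :
    orderOf (a : ZMod p) ∣ p - 1 :=
  haveI := Fact.mk hp
  ZMod.orderOf_dvd_card_sub_one (by rwa [Ne, ZMod.natCast_eq_zero_iff])

theorem sum_log_le_log_of_prime_dvd {n : ℕ} (hn : n ≠ 0) {t : Finset ℕ}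
    (ht : ∀ p ∈ t, p.Prime ∧ p ∣ n) : ∑ p ∈ t, log p ≤ log n :=
  calc ∑ p ∈ t, log p = ∑ p ∈ t, Λ p :=
        sum_congr rfl fun p hp => (ArithmeticFunction.vonMangoldt_apply_prime (ht p hp).1).symm
    _ ≤ ∑ d ∈ n.divisors, Λ d :=
        sum_le_sum_of_subset_of_nonneg (fun p hp => Nat.mem_divisors.2 ⟨(ht p hp).2, hn⟩)
          fun _ _ _ => ArithmeticFunction.vonMangoldt_nonneg
    _ = log n := ArithmeticFunction.vonMangoldt_sum

theorem sum_inv_le_of_dvd_sub_one {h : ℕ} (hh : 0 < h) {t : Finset ℕ}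
    (ht : ∀ p ∈ t, 2 ≤ p ∧ p ≤ h ^ 2 ∧ h ∣ p - 1) :
    ∑ p ∈ t, (p : ℝ)⁻¹ ≤ (1 + log h) / h := by
  set k : ℕ → ℕ := fun p => (p - 1) / h - 1
  have hk : ∀ p ∈ t, p - 1 = (k p + 1) * h ∧ k p < h := by
    intro p hp
    obtain ⟨hp2, hph, m, hm⟩ := ht p hp
    have hm0 : 0 < m := Nat.pos_of_ne_zero (by rintro rfl; omega)
    have hmh : m < h := Nat.lt_of_mul_lt_mul_left (a := h) (by rw [← hm, ← sq]; omega)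
    simp only [k, hm, Nat.mul_div_cancel_left _ hh]
    exact ⟨by rw [Nat.sub_add_cancel hm0, mul_comm], by omega⟩
  have hinj : Set.InjOn k t := fun p hp q hq hpq => by
    have hpq' : p - 1 = q - 1 := by rw [(hk p hp).1, (hk q hq).1, show k p = k q from hpq]
    have := (ht p hp).1; have := (ht q hq).1
    omega
  calc ∑ p ∈ t, (p : ℝ)⁻¹ ≤ ∑ p ∈ t, (((k p + 1 : ℕ) : ℝ) * h)⁻¹ := by
        refine sum_le_sum fun p hp => inv_anti₀ (by positivity) ?_
        have := (hk p hp).1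
        exact_mod_cast (show (k p + 1) * h ≤ p by omega)
    _ = ∑ i ∈ t.image k, (((i + 1 : ℕ) : ℝ) * h)⁻¹ :=
        (sum_image (f := fun i => (((i + 1 : ℕ) : ℝ) * h)⁻¹) hinj).symm
    _ ≤ ∑ i ∈ range h, (((i + 1 : ℕ) : ℝ) * h)⁻¹ :=
        sum_le_sum_of_subset_of_nonneg
          (fun i hi => by
            obtain ⟨p, hp, rfl⟩ := mem_image.1 hi
            exact mem_range.2 (hk p hp).2)
          fun _ _ _ => by positivity
    _ = (harmonic h : ℝ) / h := by
        simp only [harmonic, mul_inv, ← sum_mul, div_eq_mul_inv]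
        push_cast
        rfl
    _ ≤ (1 + log h) / h := by gcongr; exact harmonic_le_one_add_log h

theorem sum_log_div_le_of_dvd_pow_sub_one {a h : ℕ} (ha : 2 ≤ a) (hh : 0 < h) {t : Finset ℕ}
    (ht : ∀ p ∈ t, p.Prime ∧ h ∣ p - 1 ∧ p ∣ a ^ h - 1) :
    ∑ p ∈ t, log p / p ≤ (2 * log h * (1 + log h) + log a) / h := by
  rw [← sum_filter_add_sum_filter_not t (· ≤ h ^ 2), add_div]
  have hlogh : 0 ≤ log h := log_natCast_nonneg h
  gcongr ?_ + ?_
  · calc ∑ p ∈ t with p ≤ h ^ 2, log p / p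
          ≤ ∑ p ∈ t with p ≤ h ^ 2, 2 * log h * (p : ℝ)⁻¹ := by
          refine sum_le_sum fun p hp => ?_
          obtain ⟨hpt, hph⟩ := mem_filter.1 hp
          rw [div_eq_mul_inv]
          gcongr
          calc log p ≤ log ((h : ℝ) ^ 2) :=
                log_le_log (by exact_mod_cast (ht p hpt).1.pos) (by exact_mod_cast hph)
            _ = 2 * log h := by rw [log_pow]; norm_num
      _ = 2 * log h * ∑ p ∈ t with p ≤ h ^ 2, (p : ℝ)⁻¹ := (mul_sum _ _ _).symm
      _ ≤ 2 * log h * ((1 + log h) / h) := by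
          gcongr
          refine sum_inv_le_of_dvd_sub_one hh fun p hp => ?_
          obtain ⟨hpt, hph⟩ := mem_filter.1 hp
          exact ⟨(ht p hpt).1.two_le, hph, (ht p hpt).2.1⟩
      _ = 2 * log h * (1 + log h) / h := by ring
  · have hah : a ^ h - 1 ≠ 0 := by
      have := Nat.one_lt_pow hh.ne' (by omega : 1 < a); omega
    calc ∑ p ∈ t with ¬p ≤ h ^ 2, log p / p
          ≤ ∑ p ∈ t with ¬p ≤ h ^ 2, log p / (h : ℝ) ^ 2 := by
          refine sum_le_sum fun p hp => ?_
          obtain ⟨hpt, hph⟩ := mem_filter.1 hp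
          gcongr
          exact_mod_cast (not_le.1 hph).le
      _ = (∑ p ∈ t with ¬p ≤ h ^ 2, log p) / (h : ℝ) ^ 2 := (sum_div _ _ _).symm
      _ ≤ log ((a ^ h - 1 : ℕ) : ℝ) / (h : ℝ) ^ 2 := by
          gcongr
          refine sum_log_le_log_of_prime_dvd hah fun p hp => ?_
          exact ⟨(ht p (mem_filter.1 hp).1).1, (ht p (mem_filter.1 hp).1).2.2⟩
      _ ≤ log ((a : ℝ) ^ h) / (h : ℝ) ^ 2 := by
          gcongr
          exact_mod_cast Nat.sub_le _ _
      _ = log a / h := by rw [log_pow]; field_simp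

theorem summable_log_pow_div_rpow (k : ℕ) {σ : ℝ} (hσ : 1 < σ) :
    Summable fun n : ℕ => log n ^ k / (n : ℝ) ^ σ := by
  have hs : 0 < (σ - 1) / 2 := by linarith
  refine summable_of_isBigO_nat (g := fun n : ℕ => (n : ℝ) ^ ((σ - 1) / 2 + -σ))
    (Real.summable_nat_rpow.2 (by linarith)) ?_
  have hlog := ((isLittleO_log_rpow_rpow_atTop (k : ℝ) hs).comp_tendsto
    tendsto_natCast_atTop_atTop).isBigO.mul (Asymptotics.isBigO_refl
      (fun n : ℕ => (n : ℝ) ^ (-σ)) Filter.atTop)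
  refine hlog.congr (fun n => ?_) (fun n => ?_)
  · simp only [Function.comp, rpow_natCast, rpow_neg (Nat.cast_nonneg n), div_eq_mul_inv]
  · exact (rpow_add' (Nat.cast_nonneg n) (by linarith)).symm

theorem summable_and_tsum_le_of_sum_fiber_le {ι κ : Type*} [DecidableEq κ] {g : ι → ℝ}
    {F : κ → ℝ} (φ : ι → κ) (hg : 0 ≤ g) (hF0 : 0 ≤ F) (hF : Summable F)
    (hfib : ∀ (s : Finset ι) (k : κ), ∑ i ∈ s with φ i = k, g i ≤ F k) :
    Summable g ∧ ∑' i, g i ≤ ∑' k, F k := by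
  have hsum : ∀ s : Finset ι, ∑ i ∈ s, g i ≤ ∑' k, F k := fun s =>
    calc ∑ i ∈ s, g i = ∑ k ∈ s.image φ, ∑ i ∈ s with φ i = k, g i :=
          (sum_fiberwise_of_maps_to (fun i hi => mem_image_of_mem φ hi) g).symm
      _ ≤ ∑ k ∈ s.image φ, F k := sum_le_sum fun k _ => hfib s k
      _ ≤ ∑' k, F k := hF.sum_le_tsum _ fun k _ => hF0 k
  have hg_sum := summable_of_sum_le hg hsum
  exact ⟨hg_sum, hg_sum.tsum_le_of_sum_le hsum⟩

theorem sum_orderOf_fiber_le {a : ℕ} (ha : 2 ≤ a) {β : ℝ} (s : Finset ℕ) (h : ℕ) :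
    ∑ p ∈ s with orderOf (a : ZMod p) = h,
        (if p.Prime ∧ ¬p ∣ a then log p / ((p : ℝ) * (orderOf (a : ZMod p) : ℝ) ^ β) else 0)
      ≤ (2 * log h * (1 + log h) + log a) / (h : ℝ) ^ (1 + β) := by
  set t := s.filter fun p => p.Prime ∧ ¬p ∣ a ∧ orderOf (a : ZMod p) = h
  have ht : ∀ p ∈ t, p.Prime ∧ h ∣ p - 1 ∧ p ∣ a ^ h - 1 := fun p hp => by
    obtain ⟨-, hprime, hpa, rfl⟩ := mem_filter.1 hp
    exact ⟨hprime, orderOf_natCast_dvd_sub_one hprime hpa, dvd_pow_orderOf_natCast_sub_one p a⟩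
  have hfiber : ∑ p ∈ s with orderOf (a : ZMod p) = h,
      (if p.Prime ∧ ¬p ∣ a then log p / ((p : ℝ) * (orderOf (a : ZMod p) : ℝ) ^ β) else 0)
        = (∑ p ∈ t, log p / p) / (h : ℝ) ^ β := by
    rw [sum_div, sum_filter, sum_filter]
    refine sum_congr rfl fun p _ => ?_
    split_ifs <;> simp_all [div_div]
  rw [hfiber]
  rcases t.eq_empty_or_nonempty with ht0 | ⟨p, hp⟩
  · rw [ht0, sum_empty, zero_div]
    positivity
  have hh : 0 < h := Nat.pos_of_dvd_of_pos (ht p hp).2.1 (by have := (ht p hp).1.two_le; omega)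
  rw [rpow_add (by exact_mod_cast hh), rpow_one, ← div_div]
  gcongr
  exact sum_log_div_le_of_dvd_pow_sub_one ha hh ht

/-- Let `a, b ≥ 2` be integers, and for a prime `p ∤ a` let `h_a(p)`
be the multiplicative order of `a` mod `p`. Then the series
`∑_{p ∤ a} (ln p)/(p · h_a(p)^(1/b))` over primes `p` converges, and there is a constant
`c(a,b) > 0` bounding it. -/
theorem romanoff_order_series (a b : ℕ) (ha : 2 ≤ a) (hb : 2 ≤ b) :
    ∃ c : ℝ, 0 < c ∧
      Summable (fun p : ℕ =>
        if p.Prime ∧ ¬ (p ∣ a)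
        then Real.log p / ((p : ℝ) * (orderOf (a : ZMod p) : ℝ) ^ ((1 : ℝ) / (b : ℝ)))
        else 0) ∧
      ∑' p : ℕ,
          (if p.Prime ∧ ¬ (p ∣ a)
           then Real.log p / ((p : ℝ) * (orderOf (a : ZMod p) : ℝ) ^ ((1 : ℝ) / (b : ℝ)))
           else 0) ≤ c := by
  have hσ : 1 < 1 + (1 : ℝ) / b := by
    have : (0 : ℝ) < b := by exact_mod_cast (by omega : 0 < b)
    linarith [one_div_pos.2 this]
  have hF : Summable fun h : ℕ =>
      (2 * log h * (1 + log h) + log a) / (h : ℝ) ^ (1 + (1 : ℝ) / b) := by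
    refine ((((summable_log_pow_div_rpow 2 hσ).mul_left 2).add
      ((summable_log_pow_div_rpow 1 hσ).mul_left 2)).add
      ((summable_log_pow_div_rpow 0 hσ).mul_left (log a))).congr fun h => ?_
    ring
  have hF0 : ∀ h : ℕ, 0 ≤ (2 * log h * (1 + log h) + log a) / (h : ℝ) ^ (1 + (1 : ℝ) / b) :=
    fun h => by positivity
  obtain ⟨hsum, hle⟩ := summable_and_tsum_le_of_sum_fiber_le (fun p => orderOf (a : ZMod p))
    (fun p => ite_nonneg (by positivity) le_rfl) hF0 hF (sum_orderOf_fiber_le ha)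
  exact ⟨_, add_pos_of_nonneg_of_pos (tsum_nonneg hF0) one_pos, hsum, hle.trans (lt_add_one _).le⟩
end
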